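/- arXiv:2209.11014 — 12 statements merged into one kernel-verified Lean document; each statement's English description precedes it below -/
import Mathlib

section
/- For every s ∈ ℝ^{mn}, the blockwise softmax centering map satisfies sᵀ f̄(s) ≥ 2 f̄(s)ᵀ f̄(s) ≥ 0. -/
open scoped BigOperators

/-- The blockwise softmax `f : ℝ^{mn} → ℝ^{mn}`,
`f(s)_{ij} = exp(s_{ij}) / ∑_{l=1}^m exp(s_{il})`. -/
noncomputable def softmax (n m : ℕ) (s : Fin n × Fin m → ℝ) : Fin n × Fin m → ℝ :=
  fun p => Real.exp (s p) / ∑ l : Fin m, Real.exp (s (p.1, l))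

/-- The centered blockwise softmax `f̄(s) = f(s) − (1/m)𝟙`. -/
noncomputable def fbar (n m : ℕ) (s : Fin n × Fin m → ℝ) : Fin n × Fin m → ℝ :=
  fun p => softmax n m s p - 1 / m

private lemma aux_log_ge {x : ℝ} (hx : 1 ≤ x) : 2 * (x - 1) ≤ (x + 1) * Real.log x := by
  set F : ℝ → ℝ := fun x => (x + 1) * Real.log x - 2 * (x - 1) with hF
  have hderiv : ∀ y : ℝ, 0 < y → HasDerivAt F (1 * Real.log y + (y + 1) * y⁻¹ - 2) y := by
    intro y hy
    have h1 : HasDerivAt (fun z : ℝ => z + 1) 1 y := (hasDerivAt_id y).add_const 1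
    have h2 : HasDerivAt Real.log y⁻¹ y := Real.hasDerivAt_log hy.ne'
    have h3 : HasDerivAt (fun z : ℝ => 2 * (z - 1)) 2 y := by
      simpa using ((hasDerivAt_id y).sub_const 1).const_mul 2
    exact (h1.mul h2).sub h3
  have hmono : MonotoneOn F (Set.Ici 1) := by
    apply monotoneOn_of_deriv_nonneg (convex_Ici 1)
    · intro y hy
      have hy0 : (0:ℝ) < y := lt_of_lt_of_le one_pos hy
      exact (hderiv y hy0).continuousAt.continuousWithinAt
    · intro y hy
      rw [interior_Ici] at hy
      have hy0 : (0:ℝ) < y := lt_trans one_pos hy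
      exact (hderiv y hy0).differentiableAt.differentiableWithinAt
    · intro y hy
      rw [interior_Ici] at hy
      have hy0 : (0:ℝ) < y := lt_trans one_pos hy
      rw [(hderiv y hy0).deriv]
      have hlog : 1 - y⁻¹ ≤ Real.log y := Real.one_sub_inv_le_log_of_pos hy0
      have hyi : (y + 1) * y⁻¹ = 1 + y⁻¹ := by field_simp
      rw [hyi]
      linarith
  have h0 : F 1 = 0 := by simp [hF]
  have := hmono (Set.self_mem_Ici) hx hx
  rw [h0] at this
  simp only [hF] at this
  linarith

private lemma log_ineq_aux {a b : ℝ} (ha : 0 < a) (hb : 0 < b) (hba : b ≤ a) :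
    2 * (a - b) ^ 2 ≤ (a - b) * (Real.log a - Real.log b) * (a + b) := by
  have hx : 1 ≤ a / b := (one_le_div hb).2 hba
  have key := aux_log_ge hx
  rw [Real.log_div ha.ne' hb.ne'] at key
  have key' := mul_le_mul_of_nonneg_right key hb.le
  have e1 : 2 * (a / b - 1) * b = 2 * (a - b) := by field_simp
  have e2 : (a / b + 1) * (Real.log a - Real.log b) * b
      = (a + b) * (Real.log a - Real.log b) := by field_simp
  rw [e1, e2] at key'
  nlinarith [mul_le_mul_of_nonneg_left key' (sub_nonneg.2 hba)]

private lemma log_ineq {a b : ℝ} (ha : 0 < a) (hb : 0 < b) :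
    2 * (a - b) ^ 2 ≤ (a - b) * (Real.log a - Real.log b) * (a + b) := by
  rcases le_total b a with h | h
  · exact log_ineq_aux ha hb h
  · have H := log_ineq_aux hb ha h
    nlinarith [H]

private lemma block_ineq {m : ℕ} (hm : 2 ≤ m) (t : Fin m → ℝ) :
    2 * ∑ j, (Real.exp (t j) / (∑ l, Real.exp (t l)) - 1 / m) ^ 2 ≤
      ∑ j, t j * (Real.exp (t j) / (∑ l, Real.exp (t l)) - 1 / m) := by
  have hmn : m ≠ 0 := by omega
  have hm0 : (0:ℝ) < m := by exact_mod_cast Nat.pos_of_ne_zero hmn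
  haveI : Nonempty (Fin m) := ⟨⟨0, by omega⟩⟩
  set Z : ℝ := ∑ l, Real.exp (t l) with hZdef
  have hZ : 0 < Z := Finset.sum_pos (fun _ _ => Real.exp_pos _) Finset.univ_nonempty
  set q : ℝ := 1 / m with hqdef
  have hq : 0 < q := by positivity
  set p : Fin m → ℝ := fun j => Real.exp (t j) / Z with hpdef
  have hp : ∀ j, 0 < p j := fun j => div_pos (Real.exp_pos _) hZ
  have hpq : ∀ j, 0 < p j + q := fun j => add_pos (hp j) hq
  have hsum : ∑ j, p j = 1 := by
    rw [hpdef]; rw [← Finset.sum_div, ← hZdef, div_self hZ.ne']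
  have hqsum : ∑ _j : Fin m, q = 1 := by
    rw [Finset.sum_const, Finset.card_univ, Fintype.card_fin, nsmul_eq_mul, hqdef]
    field_simp
  have hzero : ∑ j, (p j - q) = 0 := by
    rw [Finset.sum_sub_distrib, hsum, hqsum, sub_self]
  have hlog : ∀ j, Real.log (p j) = t j - Real.log Z := by
    intro j
    rw [hpdef]
    rw [Real.log_div (Real.exp_pos _).ne' hZ.ne', Real.log_exp]
  -- Step 1
  have step1 : ∑ j, (Real.log (p j) - Real.log q) * (p j - q)
      = ∑ j, t j * (p j - q) := by
    have e : ∀ j ∈ Finset.univ, (Real.log (p j) - Real.log q) * (p j - q)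
        = t j * (p j - q) - (Real.log Z + Real.log q) * (p j - q) := by
      intro j _; rw [hlog j]; ring
    rw [Finset.sum_congr rfl e, Finset.sum_sub_distrib, ← Finset.mul_sum, hzero,
      mul_zero, sub_zero]
  -- Step 2
  have step2 : ∑ j, 2 * (p j - q) ^ 2 / (p j + q)
      ≤ ∑ j, (Real.log (p j) - Real.log q) * (p j - q) := by
    apply Finset.sum_le_sum
    intro j _
    rw [div_le_iff₀ (hpq j)]
    nlinarith [log_ineq (hp j) hq]
  -- Step 3 (Sedrakyan)
  have hsum2 : ∑ j, (p j + q) = 2 := by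
    rw [Finset.sum_add_distrib, hsum, hqsum]; norm_num
  have step3 : (∑ j, |p j - q|) ^ 2 / 2 ≤ ∑ j, (p j - q) ^ 2 / (p j + q) := by
    have := Finset.sq_sum_div_le_sum_sq_div Finset.univ (fun j => |p j - q|)
      (g := fun j => p j + q) (fun j _ => hpq j)
    rw [hsum2] at this
    simpa [sq_abs] using this
  -- Step 4
  have step4 : 2 * ∑ j, (p j - q) ^ 2 ≤ (∑ j, |p j - q|) ^ 2 := by
    set x : Fin m → ℝ := fun j => p j - q with hx
    set A : Finset (Fin m) := Finset.univ.filter (fun j => 0 ≤ x j) with hA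
    have hsplit := Finset.sum_filter_add_sum_filter_not Finset.univ (fun j => 0 ≤ x j) x
    rw [hzero] at hsplit
    set P : ℝ := ∑ j ∈ A, x j with hP
    have hNeg : ∑ j ∈ Finset.univ.filter (fun j => ¬ 0 ≤ x j), (-x j) = P := by
      rw [Finset.sum_neg_distrib]
      linarith [hsplit]
    have habs : ∑ j, |x j| = 2 * P := by
      rw [← Finset.sum_filter_add_sum_filter_not Finset.univ (fun j => 0 ≤ x j) (fun j => |x j|)]
      have e1 : ∑ j ∈ A, |x j| = P := Finset.sum_congr rfl (fun j hj => abs_of_nonneg (Finset.mem_filter.1 hj).2)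
      have e2 : ∑ j ∈ Finset.univ.filter (fun j => ¬ 0 ≤ x j), |x j| = P := by
        rw [← hNeg]
        exact Finset.sum_congr rfl (fun j hj =>
          abs_of_neg (lt_of_not_ge (Finset.mem_filter.1 hj).2))
      rw [e1, e2]; ring
    have hsq : ∑ j, x j ^ 2 ≤ 2 * P ^ 2 := by
      rw [← Finset.sum_filter_add_sum_filter_not Finset.univ (fun j => 0 ≤ x j) (fun j => x j ^ 2)]
      have b1 : ∑ j ∈ A, x j ^ 2 ≤ P ^ 2 :=
        Finset.sum_sq_le_sq_sum_of_nonneg (fun j hj => (Finset.mem_filter.1 hj).2)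
      have b2 : ∑ j ∈ Finset.univ.filter (fun j => ¬ 0 ≤ x j), x j ^ 2 ≤ P ^ 2 := by
        have : ∑ j ∈ Finset.univ.filter (fun j => ¬ 0 ≤ x j), x j ^ 2
            = ∑ j ∈ Finset.univ.filter (fun j => ¬ 0 ≤ x j), (-x j) ^ 2 := by
          apply Finset.sum_congr rfl; intro j _; ring
        rw [this]
        have := Finset.sum_sq_le_sq_sum_of_nonneg
          (s := Finset.univ.filter (fun j => ¬ 0 ≤ x j)) (f := fun j => -x j)
          (fun j hj => by
            have hxj := lt_of_not_ge (Finset.mem_filter.1 hj).2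
            simp only [neg_nonneg]
            exact hxj.le)
        rw [hNeg] at this
        exact this
      linarith
    rw [habs]
    nlinarith [hsq]
  -- combine
  have hT : ∑ j, 2 * (p j - q) ^ 2 / (p j + q) = 2 * ∑ j, (p j - q) ^ 2 / (p j + q) := by
    rw [Finset.mul_sum]; apply Finset.sum_congr rfl; intro j _; ring
  calc 2 * ∑ j, (p j - q) ^ 2 ≤ (∑ j, |p j - q|) ^ 2 := step4
    _ = 2 * ((∑ j, |p j - q|) ^ 2 / 2) := by ring
    _ ≤ 2 * ∑ j, (p j - q) ^ 2 / (p j + q) := by linarith [step3]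
    _ = ∑ j, 2 * (p j - q) ^ 2 / (p j + q) := hT.symm
    _ ≤ ∑ j, (Real.log (p j) - Real.log q) * (p j - q) := step2
    _ = ∑ j, t j * (p j - q) := step1

/-- Lemma 1: `sᵀ f̄(s) ≥ 2 f̄(s)ᵀ f̄(s) ≥ 0` for every `s ∈ ℝ^{mn}`. -/
theorem stmt0 (n m : ℕ) (hn : 1 ≤ n) (hm : 2 ≤ m) (s : Fin n × Fin m → ℝ) :
    (∑ p : Fin n × Fin m, s p * fbar n m s p) ≥
      2 * ∑ p : Fin n × Fin m, fbar n m s p * fbar n m s p ∧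
    2 * (∑ p : Fin n × Fin m, fbar n m s p * fbar n m s p) ≥ 0 := by
  constructor
  · rw [ge_iff_le, Fintype.sum_prod_type, Fintype.sum_prod_type, Finset.mul_sum]
    apply Finset.sum_le_sum
    intro i _
    have H := block_ineq hm (fun j => s (i, j))
    simp only [fbar, softmax] at *
    calc 2 * ∑ j, (Real.exp (s (i, j)) / (∑ l, Real.exp (s (i, l))) - 1 / m)
            * (Real.exp (s (i, j)) / (∑ l, Real.exp (s (i, l))) - 1 / m)
        = 2 * ∑ j, (Real.exp (s (i, j)) / (∑ l, Real.exp (s (i, l))) - 1 / m) ^ 2 := by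
          congr 1; apply Finset.sum_congr rfl; intro j _; ring
      _ ≤ ∑ j, s (i, j) * (Real.exp (s (i, j)) / (∑ l, Real.exp (s (i, l))) - 1 / m) := H
  · have : (0:ℝ) ≤ ∑ p : Fin n × Fin m, fbar n m s p * fbar n m s p :=
      Finset.sum_nonneg (fun p _ => mul_self_nonneg _)
    linarith
end

section
/- For every s ∈ ℝ^{mn}, one has the identity sᵀ f̄(s) = Σ_{i=1}^n [ Σ_{1 ≤ j < r ≤ m} (s_{ij} − s_{ir})(exp(s_{ij}) − exp(s_{ir})) ] / ( m · Σ_{l=1}^m exp(s_{il}) ). -/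
open scoped BigOperators

open Finset

lemma double_sum_expand (m : ℕ) (a b : Fin m → ℝ) :
    ∑ j : Fin m, ∑ r : Fin m, (a j - a r) * (b j - b r) =
      2 * ((m : ℝ) * ∑ j, a j * b j - (∑ j, a j) * (∑ j, b j)) := by
  simp only [sub_mul, mul_sub, Finset.sum_sub_distrib, Finset.sum_const,
    Finset.card_univ, Fintype.card_fin, nsmul_eq_mul, ← Finset.mul_sum, ← Finset.sum_mul]
  ring

lemma half_sum (m : ℕ) (a b : Fin m → ℝ) :
    2 * ∑ j : Fin m, ∑ r ∈ Finset.Ioi j, (a j - a r) * (b j - b r) =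
      ∑ j : Fin m, ∑ r : Fin m, (a j - a r) * (b j - b r) := by
  have swap : ∑ j : Fin m, ∑ r ∈ Finset.Iio j, (a j - a r) * (b j - b r)
      = ∑ j : Fin m, ∑ r ∈ Finset.Ioi j, (a j - a r) * (b j - b r) := by
    have h1 : ∀ j : Fin m, Finset.Iio j = Finset.univ.filter (fun r => r < j) := by
      intro j; ext r; simp
    have h2 : ∀ j : Fin m, Finset.Ioi j = Finset.univ.filter (fun r => j < r) := by
      intro j; ext r; simp
    simp only [h1, h2, Finset.sum_filter]
    rw [Finset.sum_comm]
    apply Finset.sum_congr rfl; intro j _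
    apply Finset.sum_congr rfl; intro r _
    by_cases h : j < r <;> simp [h]; ring
  have split : ∀ j : Fin m, ∑ r : Fin m, (a j - a r) * (b j - b r)
      = (∑ r ∈ Finset.Iio j, (a j - a r) * (b j - b r))
      + (∑ r ∈ Finset.Ioi j, (a j - a r) * (b j - b r)) := by
    intro j
    have key : (Finset.univ : Finset (Fin m)) = (Finset.Iio j ∪ {j}) ∪ Finset.Ioi j := by
      ext r
      rcases lt_trichotomy r j with h|h|h <;> simp [h] <;> omega
    have d1 : Disjoint (Finset.Iio j ∪ {j}) (Finset.Ioi j) := by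
      simp only [Finset.disjoint_left, Finset.mem_union, Finset.mem_Iio, Finset.mem_singleton,
        Finset.mem_Ioi]
      rintro x (h | rfl) <;> omega
    have d2 : Disjoint (Finset.Iio j) ({j} : Finset (Fin m)) := by
      simp only [Finset.disjoint_left, Finset.mem_Iio, Finset.mem_singleton]
      exact fun x h h' => absurd (h' ▸ h) (lt_irrefl j)
    rw [key, Finset.sum_union d1, Finset.sum_union d2]
    simp
  conv_rhs => rw [Finset.sum_congr rfl (fun j _ => split j)]
  rw [Finset.sum_add_distrib, swap]
  ring



/-- Equation (24): `sᵀ f̄(s) = ∑_i [∑_{j<r} (s_{ij}−s_{ir})(e^{s_{ij}}−e^{s_{ir}})] / (m ∑_l e^{s_{il}})`. -/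
theorem stmt1 (n m : ℕ) (hn : 1 ≤ n) (hm : 2 ≤ m) (s : Fin n × Fin m → ℝ) :
    (∑ p : Fin n × Fin m, s p * fbar n m s p) =
      ∑ i : Fin n,
        (∑ j : Fin m, ∑ r ∈ Finset.Ioi j,
            (s (i, j) - s (i, r)) * (Real.exp (s (i, j)) - Real.exp (s (i, r)))) /
          ((m : ℝ) * ∑ l : Fin m, Real.exp (s (i, l))) := by
  rw [Fintype.sum_prod_type]
  apply Finset.sum_congr rfl
  intro i _
  set a : Fin m → ℝ := fun j => s (i, j) with ha
  set b : Fin m → ℝ := fun j => Real.exp (s (i, j)) with hb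
  have hE : (0:ℝ) < ∑ l : Fin m, Real.exp (s (i, l)) :=
    Finset.sum_pos (fun l _ => Real.exp_pos _) ⟨⟨0, by omega⟩, Finset.mem_univ _⟩
  have hm0 : (0:ℝ) < (m:ℝ) := by exact_mod_cast Nat.lt_of_lt_of_le Nat.zero_lt_two hm
  have hN : (∑ j : Fin m, ∑ r ∈ Finset.Ioi j, (a j - a r) * (b j - b r))
      = (m : ℝ) * (∑ j, a j * b j) - (∑ j, a j) * (∑ j, b j) := by
    have := half_sum m a b
    rw [double_sum_expand m a b] at this
    linarith
  have hL : ∑ j : Fin m, s (i, j) * fbar n m s (i, j)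
      = (∑ j, a j * b j) / (∑ l : Fin m, Real.exp (s (i, l))) - (∑ j, a j) / m := by
    simp only [fbar, softmax, mul_sub, Finset.sum_sub_distrib, ha, hb]
    rw [Finset.sum_div, Finset.sum_div]
    congr 1
    · exact Finset.sum_congr rfl fun j _ => by ring
    · exact Finset.sum_congr rfl fun j _ => by ring
  rw [hL]
  have : (∑ j : Fin m, ∑ r ∈ Finset.Ioi j,
      (s (i, j) - s (i, r)) * (Real.exp (s (i, j)) - Real.exp (s (i, r))))
      = (m : ℝ) * (∑ j, a j * b j) - (∑ j, a j) * (∑ j, b j) := hN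
  rw [this]
  have hbE : (∑ j, b j) = ∑ l : Fin m, Real.exp (s (i, l)) := rfl
  rw [← hbE] at hE ⊢
  field_simp
end

section
/- Let m ≥ 2 and x ∈ ℝ^m. Then for all indices 1 ≤ j, r ≤ m: |exp(x_j) − exp(x_r)| / Σ_{k=1}^m exp(x_k) ≤ |tanh((x_j − x_r)/2)| ≤ |x_j − x_r| / 2. -/
open scoped BigOperators

lemma tanh_exp_form (a b : ℝ) :
    Real.tanh ((a - b) / 2) = (Real.exp a - Real.exp b) / (Real.exp a + Real.exp b) := by
  rw [Real.tanh_eq_sinh_div_cosh, Real.sinh_eq, Real.cosh_eq]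
  have h1 : Real.exp ((a - b) / 2) + Real.exp (-((a - b) / 2)) > 0 := by positivity
  have h2 : Real.exp a + Real.exp b > 0 := by positivity
  field_simp
  ring_nf
  simp only [← Real.exp_add]
  ring_nf

lemma sinh_le_mul_cosh {t : ℝ} (ht : 0 ≤ t) : Real.sinh t ≤ t * Real.cosh t := by
  have key : MonotoneOn (fun s => s * Real.cosh s - Real.sinh s) (Set.Ici 0) := by
    have hd : ∀ s : ℝ, HasDerivAt (fun s => s * Real.cosh s - Real.sinh s)
        (s * Real.sinh s) s := by
      intro s
      have := ((hasDerivAt_id s).mul (Real.hasDerivAt_cosh s)).sub (Real.hasDerivAt_sinh s)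
      exact this.congr_deriv (by simp only [id_eq, one_mul]; ring)
    apply monotoneOn_of_deriv_nonneg (convex_Ici 0)
    · exact Continuous.continuousOn (by continuity)
    · exact fun s _ => (hd s).differentiableAt.differentiableWithinAt
    · intro s hs
      rw [(hd s).deriv]
      have hs' : 0 ≤ s := le_of_lt (by simpa using hs)
      exact mul_nonneg hs' (Real.sinh_nonneg_iff.mpr hs')
  have := key (Set.self_mem_Ici) (Set.mem_Ici.mpr ht) ht
  simpa using this

lemma abs_tanh_le_abs (t : ℝ) : |Real.tanh t| ≤ |t| := by
  have key : ∀ s : ℝ, 0 ≤ s → Real.tanh s ≤ s := by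
    intro s hs
    rw [Real.tanh_eq_sinh_div_cosh, div_le_iff₀ (Real.cosh_pos s)]
    exact sinh_le_mul_cosh hs
  rcases le_total 0 t with h | h
  · rw [abs_of_nonneg h, abs_of_nonneg]
    · exact key t h
    · rw [Real.tanh_eq_sinh_div_cosh]
      exact div_nonneg (Real.sinh_nonneg_iff.mpr h) (Real.cosh_pos t).le
  · rw [abs_of_nonpos h, abs_of_nonpos]
    · have := key (-t) (by linarith)
      rw [Real.tanh_neg] at this; linarith
    · rw [Real.tanh_eq_sinh_div_cosh]
      exact div_nonpos_of_nonpos_of_nonneg (Real.sinh_nonpos_iff.mpr h) (Real.cosh_pos t).le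

/-- Inequality (26): for a vector `x ∈ ℝ^m` and any indices `j, r`,
`|e^{x_j} − e^{x_r}| / ∑_k e^{x_k} ≤ |tanh((x_j − x_r)/2)| ≤ |x_j − x_r|/2`. -/
theorem stmt3 (m : ℕ) (hm : 2 ≤ m) (x : Fin m → ℝ) (j r : Fin m) :
    |Real.exp (x j) - Real.exp (x r)| / (∑ k : Fin m, Real.exp (x k)) ≤
      |Real.tanh ((x j - x r) / 2)| ∧
    |Real.tanh ((x j - x r) / 2)| ≤ |x j - x r| / 2 := by
  constructor
  · have hS : (0:ℝ) < ∑ k : Fin m, Real.exp (x k) := by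
      apply Finset.sum_pos (fun k _ => Real.exp_pos (x k))
      exact ⟨j, Finset.mem_univ j⟩
    rw [tanh_exp_form, abs_div, abs_of_pos (by positivity : (0:ℝ) < Real.exp (x j) + Real.exp (x r))]
    rcases eq_or_ne j r with rfl | hjr
    · simp
    · apply div_le_div_of_nonneg_left (abs_nonneg _) (by positivity)
      calc Real.exp (x j) + Real.exp (x r)
          = ∑ k ∈ ({j, r} : Finset (Fin m)), Real.exp (x k) := by
            rw [Finset.sum_pair hjr]
        _ ≤ ∑ k : Fin m, Real.exp (x k) := by
            apply Finset.sum_le_sum_of_subset_of_nonneg (Finset.subset_univ _)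
            intro k _ _; exact (Real.exp_pos _).le
  · have := abs_tanh_le_abs ((x j - x r) / 2)
    rwa [abs_div, abs_two] at this
end

section
/- Suppose W has zero diagonal blocks and satisfies Assumption 2 with block row sums λ_{ik}. Let α ∈ (0,1), ḡ_a > 0, and define s₀ ∈ ℝ^{mn} by (s₀)_{ij} = c_i := (Σ_{k=1}^n λ_{ik} − ḡ_a/α)/m for all j, and a₀ := (ḡ_a/α)·(1/m)·𝟙 ∈ ℝ^{mn}. Then (s₀, a₀) is an equilibrium of the system s' = W f(s) − s − a, a' = ḡ_a f(s) − α a; i.e., W f(s₀) − s₀ − a₀ = 0 and ḡ_a f(s₀) − α a₀ = 0. -/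
open scoped BigOperators

/-- With zero diagonal blocks and Assumption 2 (block row sums `λ_{ik}` independent of the
row `j` within a block), the point `(s₀, a₀)` with `(s₀)_{ij} = (∑_k λ_{ik} − ḡ_a/α)/m` and
`a₀ = (ḡ_a/α)(1/m)𝟙` is an equilibrium of `s' = W f(s) − s − a`, `a' = ḡ_a f(s) − α a`. -/
theorem stmt4 (n m : ℕ) (hn : 1 ≤ n) (hm : 2 ≤ m)
    (W : Matrix (Fin n × Fin m) (Fin n × Fin m) ℝ)
    (lam : Fin n → Fin n → ℝ)
    (hdiag : ∀ (i : Fin n) (j l : Fin m), W (i, j) (i, l) = 0)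
    (hA2 : ∀ (i k : Fin n) (j : Fin m), ∑ l : Fin m, W (i, j) (k, l) = lam i k)
    (α ga : ℝ) (hα : α ∈ Set.Ioo (0 : ℝ) 1) (hga : 0 < ga)
    (s0 a0 : Fin n × Fin m → ℝ)
    (hs0 : ∀ (i : Fin n) (j : Fin m), s0 (i, j) = ((∑ k : Fin n, lam i k) - ga / α) / m)
    (ha0 : ∀ p : Fin n × Fin m, a0 p = ga / α * (1 / m)) :
    W.mulVec (softmax n m s0) - s0 - a0 = 0 ∧
    ga • softmax n m s0 - α • a0 = 0 := by
  have hm0 : (0:ℝ) < m := by positivity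
  have hsm : ∀ p : Fin n × Fin m, softmax n m s0 p = 1 / m := by
    rintro ⟨i, j⟩
    have hconst : ∀ l : Fin m, s0 (i, l) = ((∑ k : Fin n, lam i k) - ga / α) / m :=
      fun l => hs0 i l
    simp only [softmax, hs0 i j, hconst, Finset.sum_const, Finset.card_univ,
      Fintype.card_fin, nsmul_eq_mul]
    rw [div_eq_div_iff (by positivity) (ne_of_gt hm0)]
    ring
  constructor
  · funext p
    obtain ⟨i, j⟩ := p
    have hmv : W.mulVec (softmax n m s0) (i, j) = (∑ k : Fin n, lam i k) / m := by
      simp only [Matrix.mulVec, dotProduct]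
      rw [Fintype.sum_prod_type]
      calc (∑ k : Fin n, ∑ l : Fin m, W (i,j) (k,l) * softmax n m s0 (k,l))
          = ∑ k : Fin n, ∑ l : Fin m, W (i,j) (k,l) * (1/m) := by
            refine Finset.sum_congr rfl fun k _ => Finset.sum_congr rfl fun l _ => ?_
            rw [hsm]
        _ = ∑ k : Fin n, lam i k * (1/m) := by
            refine Finset.sum_congr rfl fun k _ => ?_
            rw [← Finset.sum_mul, hA2]
        _ = (∑ k : Fin n, lam i k) / m := by rw [← Finset.sum_mul]; ring
    simp only [Pi.sub_apply, Pi.zero_apply, hmv, hs0 i j, ha0]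
    field_simp
    ring
  · funext p
    simp only [Pi.sub_apply, Pi.smul_apply, smul_eq_mul, Pi.zero_apply, hsm, ha0]
    have hα0 : α ≠ 0 := ne_of_gt hα.1
    field_simp
    ring
end

section
/- Under Assumptions 1–3, there exist an orthogonal mn×mn matrix P with columns p_1, …, p_{mn}, real numbers μ_1 ≥ μ_2 ≥ ⋯ ≥ μ_{(m−1)n}, and real numbers μ_{(m−1)n+1}, …, μ_{mn} such that: (i) span{p_{(m−1)n+1}, …, p_{mn}} = span{ε_k ⊗ 𝟙_m : 1 ≤ k ≤ n}, where ε_k is the k-th standard basis vector of ℝ^n; (ii) Pᵀ(WΛ)P = (1/m)·diag(μ_1, …, μ_{(m−1)n}, 0, …, 0) (with n trailing zeros); (iii) PᵀΛP = (1/m)·diag(I_{(m−1)n}, O_n); (iv) PᵀWP = diag(μ_1, …, μ_{(m−1)n}, μ_{(m−1)n+1}, …, μ_{mn}). In particular the eigenvalues of WΛ are μ_1/m, …, μ_{(m−1)n}/m together with 0 of multiplicity n, and each μ_r (1 ≤ r ≤ mn) is an eigenvalue of W. -/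
open scoped BigOperators
open Matrix
open scoped RealInnerProductSpace

/-- The matrix `Λ = Iₙ ⊗ ((1/m)Iₘ − (1/m²)𝟙ₘ𝟙ₘᵀ)`, written entrywise. -/
noncomputable def Lam (n m : ℕ) : Matrix (Fin n × Fin m) (Fin n × Fin m) ℝ :=
  Matrix.of fun p q =>
    if p.1 = q.1 then (if p.2 = q.2 then 1 / (m : ℝ) else 0) - 1 / (m : ℝ) ^ 2 else 0

lemma lam_mulVec {n m : ℕ} (v : Fin n × Fin m → ℝ) (p : Fin n × Fin m) :
    (Lam n m).mulVec v p = (1/(m:ℝ)) * v p - (1/(m:ℝ)^2) * ∑ l, v (p.1, l) := by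
  simp only [Matrix.mulVec, dotProduct, Lam, Matrix.of_apply]
  rw [Fintype.sum_prod_type, Finset.sum_eq_single p.1]
  · have : ∀ l : Fin m, (if p.1 = p.1 then (if p.2 = l then 1/(m:ℝ) else 0) - 1/(m:ℝ)^2 else 0)
        * v (p.1, l) = (if p.2 = l then (1/(m:ℝ)) * v (p.1, l) else 0) - (1/(m:ℝ)^2) * v (p.1, l) := by
      intro l
      by_cases h : p.2 = l <;> simp [h] <;> ring
    rw [Finset.sum_congr rfl fun l _ => this l, Finset.sum_sub_distrib, Finset.sum_ite_eq]
    simp [Finset.mul_sum]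
  · intro i _ hi
    apply Finset.sum_eq_zero; intro l _
    rw [if_neg (fun h => hi h.symm), zero_mul]
  · simp

section Setup
variable (n m : ℕ)

/-- the indicator vectors `ε_k ⊗ 𝟙` -/
noncomputable def uvec (k : Fin n) : EuclideanSpace ℝ (Fin n × Fin m) :=
  WithLp.toLp 2 (fun p => if p.1 = k then 1 else 0)

lemma inner_uvec (k : Fin n) (v : EuclideanSpace ℝ (Fin n × Fin m)) :
    ⟪uvec n m k, v⟫ = ∑ l, v (k, l) := by
  rw [PiLp.inner_apply]
  simp only [RCLike.inner_apply, conj_trivial]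
  rw [Fintype.sum_prod_type, Finset.sum_eq_single k]
  · simp [uvec]
  · intro i _ hi
    apply Finset.sum_eq_zero; intro l _
    simp [uvec, hi]
  · simp

lemma inner_uvec_uvec (i k : Fin n) :
    ⟪uvec n m i, uvec n m k⟫ = if i = k then (m : ℝ) else 0 := by
  rw [inner_uvec]
  by_cases h : i = k <;> simp [uvec, h, eq_comm]

lemma lam_mulVec_uvec (hm : (m:ℝ) ≠ 0) (k : Fin n) : (Lam n m).mulVec (uvec n m k) = 0 := by
  funext p
  rw [lam_mulVec]
  have : ∑ l, uvec n m k (p.1, l) = if p.1 = k then (m:ℝ) else 0 := by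
    by_cases h : p.1 = k <;> simp [uvec, h]
  rw [this]
  by_cases h : p.1 = k <;> simp [uvec, h]
  rw [sq]
  field_simp
  ring

end Setup

lemma conj_eq_diagonal {ι κ : Type*} [Fintype ι] [Fintype κ] [DecidableEq κ]
    (f : κ → EuclideanSpace ℝ ι) (hf : Orthonormal ℝ f)
    (M : Matrix ι ι ℝ) (g : κ → ℝ)
    (hM : ∀ c, M.mulVec (f c) = g c • (f c)) :
    (Matrix.of fun p c => f c p)ᵀ * M * (Matrix.of fun p c => f c p) = Matrix.diagonal g := by
  rw [orthonormal_iff_ite] at hf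
  ext c c'
  rw [Matrix.mul_assoc, Matrix.mul_apply]
  have h1 : ∀ p, (M * Matrix.of fun p c => f c p) p c' = g c' * f c' p := by
    intro p
    rw [Matrix.mul_apply]
    have := congrFun (hM c') p
    simpa [Matrix.mulVec, dotProduct, Matrix.of_apply] using this
  have h2 : (⟪f c, f c'⟫ : ℝ) = ∑ p, f c p * f c' p := by
    rw [PiLp.inner_apply]; simp [RCLike.inner_apply]
    exact Finset.sum_congr rfl fun _ _ => mul_comm _ _
  calc ∑ p, (Matrix.of fun p c => f c p)ᵀ c p * (M * Matrix.of fun p c => f c p) p c'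
      = ∑ p, f c p * (g c' * f c' p) := by
        apply Finset.sum_congr rfl; intro p _; rw [h1]; rfl
    _ = g c' * ∑ p, f c p * f c' p := by
        rw [Finset.mul_sum]; apply Finset.sum_congr rfl; intro p _; ring
    _ = g c' * ⟪f c, f c'⟫ := by rw [h2]
    _ = Matrix.diagonal g c c' := by
        rw [hf c c', Matrix.diagonal]
        by_cases h : c = c' <;> simp [h]

lemma ortho_mul_self_eq_one {ι κ : Type*} [Fintype ι] [DecidableEq ι] [Fintype κ] [DecidableEq κ]
    (f : κ → EuclideanSpace ℝ ι) (hf : Orthonormal ℝ f) :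
    (Matrix.of fun p c => f c p)ᵀ * (Matrix.of fun p c => f c p) = 1 := by
  have := conj_eq_diagonal f hf 1 (fun _ => 1) (fun c => by simp)
  rw [Matrix.mul_one] at this
  rw [this, Matrix.diagonal_one]

lemma mul_transpose_eq_one_of {ι κ : Type*} [Fintype ι] [DecidableEq ι] [Fintype κ] [DecidableEq κ]
    (h : Fintype.card κ = Fintype.card ι) (P : Matrix ι κ ℝ) (hP : Pᵀ * P = 1) :
    P * Pᵀ = 1 := by
  let e : ι ≃ κ := Fintype.equivOfCardEq h.symm
  set Q : Matrix ι ι ℝ := P.submatrix id ⇑e with hQ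
  have hQ1 : Qᵀ * Q = 1 := by
    ext a b
    have := congrFun (congrFun hP (e a)) (e b)
    rw [Matrix.mul_apply] at this ⊢
    simp only [hQ, Matrix.transpose_apply, Matrix.submatrix_apply, id] at *
    rw [this, Matrix.one_apply, Matrix.one_apply]
    by_cases hab : a = b
    · simp [hab]
    · rw [if_neg (fun hh => hab (e.injective hh)), if_neg hab]
  have hQ2 : Q * Qᵀ = 1 := mul_eq_one_comm.mp hQ1
  ext p q
  have := congrFun (congrFun hQ2 p) q
  rw [Matrix.mul_apply] at this ⊢
  rw [← this]
  rw [← Equiv.sum_comp e (fun c => P p c * Pᵀ c q)]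
  apply Finset.sum_congr rfl; intro c _
  simp [hQ]

/-- Lemma 2: under Assumptions 1–3 there is an orthogonal matrix `P` simultaneously
block-diagonalizing `WΛ`, `Λ` and `W`, whose last `n` columns span `span{ε_k ⊗ 𝟙_m}`;
in particular the `μ_r/m` (descending) are the eigenvalues of `WΛ` besides `0` and the
`μ_r` are eigenvalues of `W`. -/
theorem stmt6 (n m : ℕ) (hn : 1 ≤ n) (hm : 2 ≤ m)
    (W : Matrix (Fin n × Fin m) (Fin n × Fin m) ℝ)
    (lam : Fin n → Fin n → ℝ)
    (hsymm : W.IsSymm)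
    (hdiag : ∀ (i : Fin n) (j l : Fin m), W (i, j) (i, l) = 0)
    (hA2 : ∀ (i k : Fin n) (j : Fin m), ∑ l : Fin m, W (i, j) (k, l) = lam i k)
    (hA3 : ∀ i k : Fin n, lam i k = lam k i) :
    ∃ (P : Matrix (Fin n × Fin m) (Fin ((m - 1) * n) ⊕ Fin n) ℝ)
      (μ : Fin ((m - 1) * n) → ℝ) (ν : Fin n → ℝ),
      Pᵀ * P = 1 ∧ P * Pᵀ = 1 ∧
      (∀ r r' : Fin ((m - 1) * n), r ≤ r' → μ r' ≤ μ r) ∧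
      Submodule.span ℝ
          {v : Fin n × Fin m → ℝ | ∃ k : Fin n, v = fun p => P p (Sum.inr k)} =
        Submodule.span ℝ
          {v : Fin n × Fin m → ℝ | ∃ k : Fin n, v = fun p => if p.1 = k then 1 else 0} ∧
      Pᵀ * (W * Lam n m) * P =
        Matrix.diagonal (Sum.elim (fun r => μ r / m) fun _ => 0) ∧
      Pᵀ * Lam n m * P =
        Matrix.diagonal (Sum.elim (fun _ => 1 / (m : ℝ)) fun _ => 0) ∧
      Pᵀ * W * P = Matrix.diagonal (Sum.elim μ ν) ∧
      (∀ r : Fin ((m - 1) * n),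
        Module.End.HasEigenvalue (Matrix.toLin' (W * Lam n m)) (μ r / m)) ∧
      Module.End.HasEigenvalue (Matrix.toLin' (W * Lam n m)) 0 ∧
      (∀ c : Fin ((m - 1) * n) ⊕ Fin n,
        Module.End.HasEigenvalue (Matrix.toLin' W) (Sum.elim μ ν c)) := by
  classical
  have hm0 : (m : ℝ) ≠ 0 := Nat.cast_ne_zero.mpr (by omega)
  set u := uvec n m with hu
  set S : Submodule ℝ (EuclideanSpace ℝ (Fin n × Fin m)) :=
    Submodule.span ℝ (Set.range u) with hSdef
  have hherm : W.IsHermitian := by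
    ext p q
    simpa [Matrix.conjTranspose_apply] using (congrFun (congrFun hsymm q) p).symm
  set T := Matrix.toEuclideanLin W with hTdef
  have hTapp : ∀ x : EuclideanSpace ℝ (Fin n × Fin m), T x = W.mulVec x := fun _ => rfl
  have hTsym : T.IsSymmetric := Matrix.isHermitian_iff_isSymmetric.mp hherm
  set TL := Matrix.toEuclideanLin (Lam n m) with hTLdef
  have hTLapp : ∀ x : EuclideanSpace ℝ (Fin n × Fin m), TL x = (Lam n m).mulVec x :=
    fun _ => rfl
  -- W action on the uvec's
  have hWu : ∀ k, W.mulVec (u k) = ∑ i, lam i k • u i := by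
    intro k
    funext p
    have hL : W.mulVec (u k) p = lam p.1 k := by
      rw [Matrix.mulVec, dotProduct, Fintype.sum_prod_type, Finset.sum_eq_single k]
      · rw [← hA2 p.1 k p.2]
        apply Finset.sum_congr rfl; intro l _
        simp [hu, uvec]
      · intro i _ hi
        apply Finset.sum_eq_zero; intro l _
        simp [hu, uvec, hi]
      · simp
    rw [hL]
    have hR : (∑ i, lam i k • u i) p = ∑ i, lam i k * (if p.1 = i then 1 else 0) := by
      rw [WithLp.ofLp_sum, Finset.sum_apply]
      apply Finset.sum_congr rfl; intro i _
      simp [hu, uvec]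
    rw [hR, Finset.sum_eq_single p.1]
    · simp
    · intro i _ hi; rw [if_neg (fun h => hi h.symm), mul_zero]
    · simp
  -- S is invariant under T
  have hTS : ∀ x ∈ S, T x ∈ S := by
    intro x hx
    induction hx using Submodule.span_induction with
    | mem x hx =>
      obtain ⟨k, rfl⟩ := hx
      rw [show T (u k) = ∑ i, lam i k • u i from WithLp.ofLp_injective 2 ((hTapp _).trans (hWu k))]
      exact Submodule.sum_mem _ fun i _ =>
        Submodule.smul_mem _ _ (Submodule.subset_span ⟨i, rfl⟩)
    | zero => simp
    | add x y _ _ hx hy => rw [map_add]; exact S.add_mem hx hy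
    | smul c x _ hx => rw [LinearMap.map_smul]; exact S.smul_mem c hx
  -- Sᗮ is invariant under T
  have hTSperp : ∀ x ∈ Sᗮ, T x ∈ Sᗮ := by
    intro x hx
    rw [Submodule.mem_orthogonal] at hx ⊢
    intro y hy
    rw [← hTsym y x]
    exact hx _ (hTS y hy)
  -- linear independence and dimensions
  have hulin : LinearIndependent ℝ u := by
    rw [Fintype.linearIndependent_iff]
    intro g hg k
    have h0 : (⟪u k, ∑ i, g i • u i⟫ : ℝ) = 0 := by rw [hg]; simp
    rw [inner_sum] at h0
    have h1 : ∀ i, (g i : ℝ) * ⟪u k, u i⟫ = if k = i then g k * m else 0 := by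
      intro i
      rw [hu, inner_uvec_uvec]
      by_cases h : k = i <;> simp [h]
    rw [Finset.sum_congr rfl (fun i _ => by rw [real_inner_smul_right, h1 i]),
      Finset.sum_ite_eq] at h0
    simp only [Finset.mem_univ, if_true] at h0
    exact (mul_eq_zero.mp h0).resolve_right hm0
  have hfinS : Module.finrank ℝ S = n := by
    rw [hSdef, finrank_span_eq_card hulin, Fintype.card_fin]
  have hfinE : Module.finrank ℝ (EuclideanSpace ℝ (Fin n × Fin m)) = n * m := by
    rw [finrank_euclideanSpace, Fintype.card_prod, Fintype.card_fin, Fintype.card_fin]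
  have hfinperp : Module.finrank ℝ ↥Sᗮ = (m - 1) * n := by
    have hsum := S.finrank_add_finrank_orthogonal
    rw [hfinS, hfinE] at hsum
    have h1 : (m - 1) * n + n = m * n := by
      rw [Nat.sub_mul, one_mul]
      have : n ≤ m * n := Nat.le_mul_of_pos_left n (by omega)
      omega
    have h2 : n * m = m * n := Nat.mul_comm n m
    omega
  -- eigenbases of the restrictions
  have hTSr : (T.restrict hTS).IsSymmetric := hTsym.restrict_invariant hTS
  have hTPr : (T.restrict hTSperp).IsSymmetric := hTsym.restrict_invariant hTSperp
  obtain ⟨bS, ν, hbS⟩ :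
      ∃ (b : OrthonormalBasis (Fin n) ℝ S) (ν : Fin n → ℝ),
        ∀ k, T.restrict hTS (b k) = ν k • b k :=
    ⟨hTSr.eigenvectorBasis hfinS, hTSr.eigenvalues hfinS,
      fun k => hTSr.apply_eigenvectorBasis hfinS k⟩
  obtain ⟨bP, μ0, hbP⟩ :
      ∃ (b : OrthonormalBasis (Fin ((m - 1) * n)) ℝ ↥Sᗮ) (μ0 : Fin ((m - 1) * n) → ℝ),
        ∀ r, T.restrict hTSperp (b r) = μ0 r • b r :=
    ⟨hTPr.eigenvectorBasis hfinperp, hTPr.eigenvalues hfinperp,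
      fun r => hTPr.apply_eigenvectorBasis hfinperp r⟩
  -- sort the eigenvalues on Sᗮ in descending order
  set σ := Tuple.sort (fun r => -(μ0 r)) with hσ
  set μ : Fin ((m - 1) * n) → ℝ := fun r => μ0 (σ r) with hμ
  have hmono : ∀ r r' : Fin ((m - 1) * n), r ≤ r' → μ r' ≤ μ r := by
    intro r r' h
    have := Tuple.monotone_sort (fun r => -(μ0 r)) h
    simp only [Function.comp_apply, neg_le_neg_iff] at this
    exact this
  -- the orthonormal family of eigenvectors
  set f : Fin ((m - 1) * n) ⊕ Fin n → EuclideanSpace ℝ (Fin n × Fin m) :=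
    Sum.elim (fun r => (bP (σ r) : EuclideanSpace ℝ (Fin n × Fin m)))
      (fun k => (bS k : EuclideanSpace ℝ (Fin n × Fin m))) with hf
  have horth : Orthonormal ℝ f := by
    have hbPo := bP.orthonormal
    have hbSo := bS.orthonormal
    rw [orthonormal_iff_ite] at hbPo hbSo ⊢
    rintro (r | k) (r' | k')
    · simp only [hf, Sum.elim_inl]
      rw [← Submodule.coe_inner, hbPo]
      by_cases h : r = r'
      · simp [h]
      · rw [if_neg (fun hh => h (σ.injective hh)), if_neg (by simpa using h)]
    · simp only [hf, Sum.elim_inl, Sum.elim_inr]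
      rw [Submodule.inner_left_of_mem_orthogonal (bS k').2 (bP (σ r)).2]
      simp
    · simp only [hf, Sum.elim_inl, Sum.elim_inr]
      rw [Submodule.inner_right_of_mem_orthogonal (bS k).2 (bP (σ r')).2]
      simp
    · simp only [hf, Sum.elim_inr]
      rw [← Submodule.coe_inner, hbSo]
      by_cases h : k = k' <;> simp [h]
  -- action of W on the family f
  have hWf : ∀ c, W.mulVec (f c) = (Sum.elim μ ν c) • f c := by
    rintro (r | k)
    · have h1 : (↑(T.restrict hTSperp (bP (σ r))) : EuclideanSpace ℝ (Fin n × Fin m))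
          = T ↑(bP (σ r)) := rfl
      have := congrArg (Subtype.val) (hbP (σ r))
      rw [h1] at this
      simp only [hf, Sum.elim_inl, Sum.elim_inl]
      rw [← hTapp, this]
      rfl
    · have h1 : (↑(T.restrict hTS (bS k)) : EuclideanSpace ℝ (Fin n × Fin m))
          = T ↑(bS k) := rfl
      have := congrArg (Subtype.val) (hbS k)
      rw [h1] at this
      simp only [hf, Sum.elim_inr]
      rw [← hTapp, this]
      rfl
  -- action of Λ
  have hLamS : ∀ x ∈ S, (Lam n m).mulVec x = 0 := by
    intro x hx
    rw [← hTLapp]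
    induction hx using Submodule.span_induction with
    | mem x hx =>
      obtain ⟨k, rfl⟩ := hx
      rw [hTLapp, hu]
      exact lam_mulVec_uvec n m hm0 k
    | zero => simp
    | add x y _ _ hx hy => rw [map_add, WithLp.ofLp_add, hx, hy, add_zero]
    | smul c x _ hx => rw [LinearMap.map_smul, WithLp.ofLp_smul, hx, smul_zero]
  have hLamPerp : ∀ x ∈ Sᗮ, (Lam n m).mulVec x = (1/(m:ℝ)) • x := by
    intro x hx
    funext p
    rw [lam_mulVec]
    have h0 : ∑ l, x (p.1, l) = 0 := by
      have := (Submodule.mem_orthogonal S x).mp hx (u p.1)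
        (Submodule.subset_span ⟨p.1, rfl⟩)
      rw [hu, inner_uvec] at this
      exact this
    rw [h0, mul_zero, sub_zero]
    rfl
  have hLamf : ∀ c, (Lam n m).mulVec (f c)
      = (Sum.elim (fun _ => 1/(m:ℝ)) (fun _ => (0:ℝ)) c) • f c := by
    rintro (r | k)
    · simp only [hf, Sum.elim_inl]
      exact hLamPerp _ (bP (σ r)).2
    · simp only [hf, Sum.elim_inr]
      rw [hLamS _ (bS k).2, zero_smul]
  have hWLamf : ∀ c, (W * Lam n m).mulVec (f c)
      = (Sum.elim (fun r => μ r / (m:ℝ)) (fun _ => (0:ℝ)) c) • f c := by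
    rintro (r | k)
    · rw [← Matrix.mulVec_mulVec, hLamf (Sum.inl r), Matrix.mulVec_smul,
        hWf (Sum.inl r), smul_smul]
      simp only [Sum.elim_inl]
      congr 1
      field_simp
    · rw [← Matrix.mulVec_mulVec, hLamf (Sum.inr k)]
      simp only [Sum.elim_inr, zero_smul, Matrix.mulVec_zero]
  -- the orthogonal matrix P
  set P : Matrix (Fin n × Fin m) (Fin ((m - 1) * n) ⊕ Fin n) ℝ :=
    Matrix.of fun p c => f c p with hP
  refine ⟨P, μ, ν, ?_, ?_, hmono, ?_, ?_, ?_, ?_, ?_, ?_, ?_⟩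
  · exact ortho_mul_self_eq_one f horth
  · apply mul_transpose_eq_one_of
    · rw [Fintype.card_sum, Fintype.card_fin, Fintype.card_fin, Fintype.card_prod,
        Fintype.card_fin, Fintype.card_fin, Nat.sub_mul, one_mul]
      have : n ≤ m * n := Nat.le_mul_of_pos_left n (by omega)
      have h2 : n * m = m * n := Nat.mul_comm n m
      omega
    · exact ortho_mul_self_eq_one f horth
  · -- the span condition
    have hsetA : {v : Fin n × Fin m → ℝ | ∃ k : Fin n, v = fun p => P p (Sum.inr k)}
        = Set.range (fun k => ((bS k : EuclideanSpace ℝ (Fin n × Fin m)) : Fin n × Fin m → ℝ)) := by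
      ext v
      constructor
      · rintro ⟨k, rfl⟩; exact ⟨k, rfl⟩
      · rintro ⟨k, rfl⟩; exact ⟨k, rfl⟩
    have hsetB : {v : Fin n × Fin m → ℝ | ∃ k : Fin n, v = fun p => if p.1 = k then 1 else 0}
        = Set.range (fun k => ((u k : EuclideanSpace ℝ (Fin n × Fin m)) : Fin n × Fin m → ℝ)) := by
      ext v
      constructor
      · rintro ⟨k, rfl⟩; exact ⟨k, rfl⟩
      · rintro ⟨k, rfl⟩; exact ⟨k, rfl⟩
    rw [hsetA, hsetB]
    have hspanE : Submodule.span ℝ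
        (Set.range (fun k => ((bS k : EuclideanSpace ℝ (Fin n × Fin m))))) = S := by
      apply le_antisymm
      · rw [Submodule.span_le]
        rintro x ⟨k, rfl⟩
        exact (bS k).2
      · have h1 : Submodule.map S.subtype ⊤ = S := Submodule.map_subtype_top S
        have h2 : (⊤ : Submodule ℝ S) = Submodule.span ℝ (Set.range ⇑bS.toBasis) :=
          bS.toBasis.span_eq.symm
        calc S = Submodule.map S.subtype ⊤ := h1.symm
          _ = Submodule.map S.subtype (Submodule.span ℝ (Set.range ⇑bS.toBasis)) := by
              rw [← h2]
          _ = Submodule.span ℝ (S.subtype '' Set.range ⇑bS.toBasis) :=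
              Submodule.map_span _ _
          _ ≤ Submodule.span ℝ (Set.range fun k => ((bS k : EuclideanSpace ℝ (Fin n × Fin m)))) := by
              apply Submodule.span_mono
              rintro x ⟨y, ⟨k, rfl⟩, rfl⟩
              exact ⟨k, by simp⟩
    have key : ∀ (g : Fin n → EuclideanSpace ℝ (Fin n × Fin m)),
        Submodule.span ℝ (Set.range fun k => ((g k : EuclideanSpace ℝ (Fin n × Fin m)) : Fin n × Fin m → ℝ))
          = (Submodule.span ℝ (Set.range g)).map
              (WithLp.linearEquiv 2 ℝ (Fin n × Fin m → ℝ)).toLinearMap := by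
      intro g; rw [Submodule.map_span, ← Set.range_comp]; rfl
    exact (key (fun k => (bS k : EuclideanSpace ℝ (Fin n × Fin m)))).trans
      ((congrArg _ (hspanE.trans hSdef)).trans (key u).symm)
  · rw [hP]
    exact conj_eq_diagonal f horth (W * Lam n m) _ hWLamf
  · rw [hP]
    exact conj_eq_diagonal f horth (Lam n m) _ hLamf
  · rw [hP]
    exact conj_eq_diagonal f horth W _ hWf
  · -- eigenvalues of WΛ
    intro r
    apply Module.End.hasEigenvalue_of_hasEigenvector
      (x := (f (Sum.inl r) : Fin n × Fin m → ℝ))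
    constructor
    · rw [Module.End.mem_eigenspace_iff]
      have heq : Matrix.toLin' (W * Lam n m) (f (Sum.inl r))
          = (W * Lam n m).mulVec (f (Sum.inl r)) := Matrix.toLin'_apply _ _
      exact heq.trans (hWLamf (Sum.inl r))
    · intro h
      have h1 : ‖f (Sum.inl r)‖ = 1 := horth.1 (Sum.inl r)
      rw [show f (Sum.inl r) = (0 : EuclideanSpace ℝ (Fin n × Fin m)) from
          WithLp.ofLp_injective 2 (h.trans (WithLp.ofLp_zero 2).symm), norm_zero] at h1
      exact zero_ne_one h1
  · -- 0 is an eigenvalue of WΛ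
    apply Module.End.hasEigenvalue_of_hasEigenvector
      (x := (f (Sum.inr ⟨0, hn⟩) : Fin n × Fin m → ℝ))
    constructor
    · rw [Module.End.mem_eigenspace_iff]
      have heq : Matrix.toLin' (W * Lam n m) (f (Sum.inr ⟨0, hn⟩))
          = (W * Lam n m).mulVec (f (Sum.inr ⟨0, hn⟩)) := Matrix.toLin'_apply _ _
      exact heq.trans (hWLamf (Sum.inr ⟨0, hn⟩))
    · intro h
      have h1 : ‖f (Sum.inr ⟨0, hn⟩)‖ = 1 := horth.1 (Sum.inr ⟨0, hn⟩)
      rw [show f (Sum.inr ⟨0, hn⟩) = (0 : EuclideanSpace ℝ (Fin n × Fin m)) from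
          WithLp.ofLp_injective 2 (h.trans (WithLp.ofLp_zero 2).symm),
        norm_zero] at h1
      exact zero_ne_one h1
  · -- eigenvalues of W
    intro c
    apply Module.End.hasEigenvalue_of_hasEigenvector (x := (f c : Fin n × Fin m → ℝ))
    constructor
    · rw [Module.End.mem_eigenspace_iff]
      have heq : Matrix.toLin' W (f c) = W.mulVec (f c) := Matrix.toLin'_apply _ _
      exact heq.trans (hWf c)
    · intro h
      have h1 : ‖f c‖ = 1 := horth.1 c
      rw [show f c = (0 : EuclideanSpace ℝ (Fin n × Fin m)) from
          WithLp.ofLp_injective 2 (h.trans (WithLp.ofLp_zero 2).symm), norm_zero] at h1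
      exact zero_ne_one h1
end

section
/- Under Assumptions 1–3, let μ_1/m ≥ ⋯ ≥ μ_{(m−1)n}/m denote the eigenvalues of WΛ other than the eigenvalue 0 of multiplicity n (counted with multiplicity). Then the characteristic polynomial of the 2mn×2mn matrix H = [[WΛ − I, −I], [ḡ_a Λ, −α I]] equals (z + α)^n (z + 1)^n · Π_{i=1}^{(m−1)n} ( z² + (1 + α − μ_i/m) z + (ḡ_a/m + α(1 − μ_i/m)) ). Equivalently, the eigenvalues of H are −α and −1, each with multiplicity n, together with the pairs ν_{i,±} = (μ_i − m(1+α))/(2m) ± (1/2)√((α + μ_i/m − 1)² − 4ḡ_a/m) for 1 ≤ i ≤ (m−1)n. -/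
open scoped BigOperators
open Matrix Polynomial

lemma lam_col_sum (n m : ℕ) (hm : (m : ℝ) ≠ 0) (k : Fin n) (q : Fin n × Fin m) :
    ∑ l : Fin m, Lam n m (k, l) q = 0 := by
  by_cases hk : k = q.1
  · simp only [Lam, Matrix.of_apply, hk, if_true]
    rw [Finset.sum_sub_distrib]
    rw [Finset.sum_ite_eq' Finset.univ q.2 (fun _ => 1 / (m:ℝ))]
    simp only [Finset.mem_univ, if_true, Finset.sum_const, Finset.card_univ, Fintype.card_fin,
      nsmul_eq_mul]
    field_simp
    ring
  · simp [Lam, hk]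

lemma E_apply (n m : ℕ) (hm : (m : ℝ) ≠ 0) (p q : Fin n × Fin m) :
    ((1 : Matrix (Fin n × Fin m) (Fin n × Fin m) ℝ) - (m : ℝ) • Lam n m) p q =
      if p.1 = q.1 then 1 / (m : ℝ) else 0 := by
  rcases p with ⟨i, j⟩; rcases q with ⟨k, l⟩
  by_cases hik : i = k
  · by_cases hjl : j = l
    · subst hik; subst hjl
      simp only [Matrix.sub_apply, Matrix.one_apply_eq, Matrix.smul_apply, Lam, Matrix.of_apply,
        if_true, smul_eq_mul]
      field_simp
      ring
    · have : (⟨i,j⟩ : Fin n × Fin m) ≠ ⟨k,l⟩ := by simp [hjl]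
      subst hik
      simp only [Matrix.sub_apply, Matrix.one_apply_ne this, Matrix.smul_apply, Lam,
        Matrix.of_apply, if_true, hjl, if_false, smul_eq_mul]
      field_simp
      ring
  · have : (⟨i,j⟩ : Fin n × Fin m) ≠ ⟨k,l⟩ := by simp [hik]
    simp [Matrix.sub_apply, Matrix.one_apply_ne this, Lam, hik]

lemma EW_apply (n m : ℕ) (hm : (m : ℝ) ≠ 0)
    (W : Matrix (Fin n × Fin m) (Fin n × Fin m) ℝ)
    (lam : Fin n → Fin n → ℝ)
    (hsymm : W.IsSymm)
    (hA2 : ∀ (i k : Fin n) (j : Fin m), ∑ l : Fin m, W (i, j) (k, l) = lam i k)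
    (p q : Fin n × Fin m) :
    (((1 : Matrix (Fin n × Fin m) (Fin n × Fin m) ℝ) - (m : ℝ) • Lam n m) * W) p q =
      lam q.1 p.1 / m := by
  rw [Matrix.mul_apply, Fintype.sum_prod_type]
  have h1 : ∀ (k : Fin n) (l : Fin m),
      ((1 : Matrix (Fin n × Fin m) (Fin n × Fin m) ℝ) - (m : ℝ) • Lam n m) p (k, l) * W (k, l) q
        = if p.1 = k then (1 / m) * W (k, l) q else 0 := by
    intro k l
    rw [E_apply n m hm]
    by_cases h : p.1 = k <;> simp [h]
  simp only [h1]
  have h2 : ∀ k : Fin n, (∑ l : Fin m, if p.1 = k then 1 / (m:ℝ) * W (k, l) q else 0)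
      = if p.1 = k then ∑ l : Fin m, 1 / (m:ℝ) * W (k, l) q else 0 := by
    intro k; by_cases h : p.1 = k <;> simp [h]
  simp only [h2]
  rw [Finset.sum_ite_eq Finset.univ p.1 (fun k => ∑ l, (1 / (m:ℝ)) * W (k, l) q)]
  simp only [Finset.mem_univ, if_true]
  rw [← Finset.mul_sum]
  have h3 : ∀ l, W (p.1, l) q = W q (p.1, l) := fun l => (hsymm.apply _ _)
  rw [Finset.sum_congr rfl (fun l _ => h3 l)]
  have h4 := hA2 q.1 p.1 q.2
  rw [show (q.1, q.2) = q from rfl] at h4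
  rw [h4]
  ring

lemma hEA_lemma (n m : ℕ) (hm : (m : ℝ) ≠ 0)
    (W : Matrix (Fin n × Fin m) (Fin n × Fin m) ℝ)
    (lam : Fin n → Fin n → ℝ)
    (hsymm : W.IsSymm)
    (hA2 : ∀ (i k : Fin n) (j : Fin m), ∑ l : Fin m, W (i, j) (k, l) = lam i k) :
    ((1 : Matrix (Fin n × Fin m) (Fin n × Fin m) ℝ) - (m : ℝ) • Lam n m) * (W * Lam n m) = 0 := by
  rw [← Matrix.mul_assoc]
  ext p q
  rw [Matrix.mul_apply, Fintype.sum_prod_type]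
  simp only [EW_apply n m hm W lam hsymm hA2]
  have : ∀ k : Fin n, ∑ l : Fin m, lam k p.1 / m * Lam n m (k, l) q
      = (lam k p.1 / m) * ∑ l : Fin m, Lam n m (k, l) q := by
    intro k; rw [Finset.mul_sum]
  simp only [this, lam_col_sum n m hm, mul_zero, Finset.sum_const_zero, Matrix.zero_apply]

section Helpers

variable {ι : Type*} [Fintype ι] [DecidableEq ι]

lemma charpoly_eval' {R : Type*} [CommRing R] (M : Matrix ι ι R) (t : R) :
    M.charpoly.eval t = (t • (1 : Matrix ι ι R) - M).det := by
  rw [Matrix.charpoly, ← Polynomial.coe_evalRingHom, RingHom.map_det]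
  congr 1
  ext i j
  by_cases h : i = j <;>
    simp [charmatrix_apply, Matrix.diagonal_apply, h, Matrix.one_apply]

lemma charmatrix_map' {R S : Type*} [CommRing R] [CommRing S] (f : R[X] →+* S)
    (M : Matrix ι ι R) :
    (charmatrix M).map f = (f X) • (1 : Matrix ι ι S) - M.map (f.comp Polynomial.C) := by
  ext i j
  by_cases h : i = j <;>
    simp [charmatrix_apply, Matrix.diagonal_apply, h, Matrix.one_apply, mul_comm]

lemma det_one_sub_blockconst (n m : ℕ) {F : Type*} [Field F] (s : F) :
    (Matrix.of fun p q : Fin n × Fin m =>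
        (if p = q then (1 : F) else 0) - (if p.1 = q.1 then s else 0)).det
      = (1 - (m : F) * s) ^ n := by
  have hre : (Matrix.of fun p q : Fin n × Fin m =>
        (if p = q then (1 : F) else 0) - (if p.1 = q.1 then s else 0))
      = (Matrix.blockDiagonal fun _ : Fin n =>
          (1 : Matrix (Fin m) (Fin m) F) - s • (Matrix.of fun _ _ => (1 : F))).submatrix
        (Equiv.prodComm (Fin n) (Fin m)) (Equiv.prodComm (Fin n) (Fin m)) := by
    ext ⟨i, j⟩ ⟨k, l⟩
    simp only [Matrix.of_apply, Matrix.submatrix_apply, Equiv.prodComm_apply, Prod.swap_prod_mk,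
      Matrix.blockDiagonal_apply, Matrix.sub_apply, Matrix.smul_apply, Matrix.one_apply,
      smul_eq_mul, mul_one, Prod.mk.injEq]
    by_cases hik : i = k <;> by_cases hjl : j = l <;> simp [hik, hjl]
  rw [hre, Matrix.det_submatrix_equiv_self, Matrix.det_blockDiagonal]
  have hone : (1 : Matrix (Fin m) (Fin m) F) - s • (Matrix.of fun _ _ => (1 : F))
      = 1 + Matrix.replicateCol Unit (fun _ => -s) * Matrix.replicateRow Unit (fun _ => (1 : F)) := by
    ext j l
    simp [Matrix.mul_apply, Matrix.one_apply, sub_eq_add_neg]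
  rw [Finset.prod_congr rfl fun i _ => by rw [hone, Matrix.det_one_add_replicateCol_mul_replicateRow]]
  simp [dotProduct, Finset.prod_const, mul_comm, sub_eq_add_neg]

end Helpers

lemma scalar_key {F : Type*} [Field F] (n m : ℕ) (hm : 2 ≤ m) (x a g : F)
    (u : Fin ((m - 1) * n) → F)
    (hmk : (m : F) ≠ 0) (hd : x + a ≠ 0)
    (hc : (x + a) * (x + 1) + g / (m : F) ≠ 0) :
    (1 - g / ((m : F) * ((x + a) * (x + 1) + g / (m : F)))) ^ n *
      ((x + a) ^ (n * m) * ((((x + a) * (x + 1) + g / (m : F)) / (x + a)) ^ n *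
        ∏ i, (((x + a) * (x + 1) + g / (m : F)) / (x + a) - u i))) =
    (x + a) ^ n * (x + 1) ^ n *
      ∏ i, (x ^ 2 + (1 + a - u i) * x + (g / (m : F) + a * (1 - u i))) := by
  set d : F := x + a with hdd
  set c : F := d * (x + 1) + g / (m : F) with hcc
  have hnm : n * m = n + (m - 1) * n := by
    obtain ⟨m', rfl⟩ : ∃ m', m = m' + 1 := ⟨m - 1, by omega⟩
    simp only [Nat.add_sub_cancel]
    ring
  have hQ : ∀ i, x ^ 2 + (1 + a - u i) * x + (g / (m : F) + a * (1 - u i)) = c - d * u i := by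
    intro i; rw [hcc, hdd]; ring
  have hfac : ∀ i, c / d - u i = (c - d * u i) / d := by
    intro i; field_simp
  rw [Finset.prod_congr rfl fun i _ => hfac i, Finset.prod_div_distrib, Finset.prod_const,
    Finset.card_univ, Fintype.card_fin, Finset.prod_congr rfl fun i _ => hQ i]
  have h1 : 1 - g / ((m : F) * c) = d * (x + 1) / c := by
    rw [eq_div_iff hc, sub_mul, one_mul, div_mul_eq_mul_div, mul_comm (m : F) c, mul_comm g c,
      mul_div_mul_left _ _ hc, hcc]
    ring
  rw [h1, hnm, pow_add, div_pow, mul_pow]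
  clear_value c d
  clear hcc hfac hQ hdd
  set P : F := ∏ i, (c - d * u i) with hP
  clear_value P
  generalize (m - 1) * n = k
  field_simp
  have hdd' : d ^ n * d⁻¹ ^ n = 1 := by rw [← mul_pow, mul_inv_cancel₀ hd, one_pow]
  linear_combination (c ^ n * P * (1 + x) ^ n) * hdd'


set_option maxHeartbeats 1600000 in
/-- Under Assumptions 1–3, if `μ_i/m` (for `1 ≤ i ≤ (m−1)n`) are the eigenvalues of `WΛ`
besides the eigenvalue `0` of multiplicity `n` (encoded by the characteristic polynomial
factorization of `WΛ`), then the characteristic polynomial of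
`H = [[WΛ − I, −I], [ḡ_a Λ, −α I]]` is
`(z+α)^n (z+1)^n ∏ᵢ (z² + (1+α−μᵢ/m) z + (ḡ_a/m + α(1−μᵢ/m)))`. -/
theorem stmt8 (n m : ℕ) (hn : 1 ≤ n) (hm : 2 ≤ m)
    (α ga : ℝ) (hα : α ∈ Set.Ioo (0 : ℝ) 1) (hga : 0 < ga)
    (W : Matrix (Fin n × Fin m) (Fin n × Fin m) ℝ)
    (lam : Fin n → Fin n → ℝ)
    (hsymm : W.IsSymm)
    (hdiag : ∀ (i : Fin n) (j l : Fin m), W (i, j) (i, l) = 0)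
    (hA2 : ∀ (i k : Fin n) (j : Fin m), ∑ l : Fin m, W (i, j) (k, l) = lam i k)
    (hA3 : ∀ i k : Fin n, lam i k = lam k i)
    (μ : Fin ((m - 1) * n) → ℝ)
    (hchar : (W * Lam n m).charpoly =
      X ^ n * ∏ i : Fin ((m - 1) * n), (X - C (μ i / m))) :
    (Matrix.fromBlocks (W * Lam n m - 1) (-1) (ga • Lam n m)
        (-(α • (1 : Matrix (Fin n × Fin m) (Fin n × Fin m) ℝ)))).charpoly =
      (X + C α) ^ n * (X + C 1) ^ n *
        ∏ i : Fin ((m - 1) * n),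
          (X ^ 2 + C (1 + α - μ i / m) * X + C (ga / m + α * (1 - μ i / m))) := by
  classical
  have hm0 : (m : ℝ) ≠ 0 := Nat.cast_ne_zero.mpr (by omega)
  have hmpos : (0 : ℝ) < m := by exact_mod_cast Nat.lt_of_lt_of_le Nat.zero_lt_two hm
  set K := FractionRing (Polynomial ℝ) with hKdef
  set φ : Polynomial ℝ →+* K := algebraMap (Polynomial ℝ) K with hφdef
  have hφ : Function.Injective φ := IsFractionRing.injective _ _
  apply hφ
  set ψ : ℝ →+* K := φ.comp Polynomial.C with hψdef
  have hφC : ∀ r : ℝ, φ (C r) = ψ r := fun r => rfl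
  set x : K := φ X with hxdef
  set a : K := ψ α with hadef
  set g : K := ψ ga with hgdef
  set A' : Matrix (Fin n × Fin m) (Fin n × Fin m) K := (W * Lam n m).map ψ with hA'def
  set L' : Matrix (Fin n × Fin m) (Fin n × Fin m) K := (Lam n m).map ψ with hL'def
  have hmK : (m : K) ≠ 0 := by
    rw [← map_natCast φ m]
    exact (map_ne_zero_iff φ hφ).mpr (Nat.cast_ne_zero.mpr (by omega))
  have hψm : ψ ((m : ℝ)) = (m : K) := map_natCast ψ m
  -- d = x + a ≠ 0
  have hdφ : φ (X + C α) = x + a := by rw [map_add, hφC]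
  have hd : x + a ≠ 0 := by
    rw [← hdφ]
    refine (map_ne_zero_iff φ hφ).mpr fun h => ?_
    have h0 := congrArg (Polynomial.eval 0) h
    simp only [eval_add, eval_X, eval_C, eval_zero, zero_add] at h0
    exact absurd h0 (ne_of_gt hα.1)
  -- c ≠ 0
  have hcφ : φ ((X + C α) * (X + 1) + C (ga / m)) = (x + a) * (x + 1) + g / (m : K) := by
    rw [map_add, _root_.map_mul, hdφ, map_add, _root_.map_one]
    rw [hφC (ga / (m:ℝ)), show ψ (ga / (m:ℝ)) = g / (m:K) by rw [map_div₀, hψm]]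
  have hc : (x + a) * (x + 1) + g / (m : K) ≠ 0 := by
    rw [← hcφ]
    refine (map_ne_zero_iff φ hφ).mpr fun h => ?_
    have h0 := congrArg (Polynomial.eval 0) h
    simp only [eval_add, eval_mul, eval_X, eval_C, eval_one, eval_zero, zero_add] at h0
    have h5 : (0 : ℝ) < ga / m := div_pos hga hmpos
    have h6 := hα.1
    nlinarith
  -- map of E to K
  have hEmap : ((1 : Matrix (Fin n × Fin m) (Fin n × Fin m) ℝ) - (m : ℝ) • Lam n m).map ψ
      = (1 : Matrix (Fin n × Fin m) (Fin n × Fin m) K) - (m : K) • L' := by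
    ext p q
    by_cases h : p = q <;>
      simp [hL'def, Matrix.map_apply, Matrix.sub_apply, Matrix.smul_apply, Matrix.one_apply, h,
        smul_eq_mul, hψm]
  have hE'A' : ((1 : Matrix (Fin n × Fin m) (Fin n × Fin m) K) - (m : K) • L') * A' = 0 := by
    have h0 := hEA_lemma n m hm0 W lam hsymm hA2
    have h1 := congrArg
      (fun M : Matrix (Fin n × Fin m) (Fin n × Fin m) ℝ => M.map (ψ : ℝ →+* K)) h0
    rw [Matrix.map_mul, hEmap,
      show ((0 : Matrix (Fin n × Fin m) (Fin n × Fin m) ℝ)).map (ψ : ℝ →+* K) = 0 from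
        Matrix.map_zero _ (map_zero ψ)] at h1
    exact h1
  have hb11 : (charmatrix (W * Lam n m - 1)).map φ
      = x • (1 : Matrix (Fin n × Fin m) (Fin n × Fin m) K) - (A' - 1) := by
    rw [charmatrix_map' φ, ← hψdef]
    congr 1
    ext p q
    simp only [Matrix.sub_apply, Matrix.map_apply, map_sub, hA'def]
    congr 1
    by_cases h : p = q <;> simp [h, Matrix.one_apply]
  have hb12 : (-(((-1) : Matrix (Fin n × Fin m) (Fin n × Fin m) ℝ).map C)).map φ
      = (1 : Matrix (Fin n × Fin m) (Fin n × Fin m) K) := by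
    ext p q
    by_cases h : p = q <;>
      simp [Matrix.map_apply, Matrix.neg_apply, Matrix.one_apply, h, hφC]
  have hb21 : (-((ga • Lam n m).map C)).map φ
      = -(g • L') := by
    ext p q
    simp [hL'def, Matrix.map_apply, Matrix.neg_apply, Matrix.smul_apply, smul_eq_mul,
      _root_.map_mul, hφC, hgdef]
  have hb22 : (charmatrix (-(α • (1 : Matrix (Fin n × Fin m) (Fin n × Fin m) ℝ)))).map φ
      = (x + a) • (1 : Matrix (Fin n × Fin m) (Fin n × Fin m) K) := by
    rw [charmatrix_map' φ, ← hψdef]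
    ext p q
    by_cases h : p = q <;>
      simp [Matrix.map_apply, Matrix.neg_apply, Matrix.smul_apply, Matrix.one_apply, h,
        smul_eq_mul, hφC, add_mul, mul_add, sub_neg_eq_add, hxdef, hadef]
  have hdet1 : φ ((Matrix.fromBlocks (W * Lam n m - 1) (-1) (ga • Lam n m)
        (-(α • (1 : Matrix (Fin n × Fin m) (Fin n × Fin m) ℝ)))).charpoly)
      = (Matrix.fromBlocks (x • (1 : Matrix (Fin n × Fin m) (Fin n × Fin m) K) - (A' - 1)) 1
          (-(g • L')) ((x + a) • 1)).det := by
    rw [Matrix.charpoly, RingHom.map_det, RingHom.mapMatrix_apply, Matrix.charmatrix_fromBlocks,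
      Matrix.fromBlocks_map,
      hb11, hb12, hb21, hb22]
  letI : Invertible ((x + a) • (1 : Matrix (Fin n × Fin m) (Fin n × Fin m) K)) :=
    ⟨(x + a)⁻¹ • 1,
      by rw [Matrix.smul_mul, Matrix.one_mul, smul_smul, inv_mul_cancel₀ hd, one_smul],
      by rw [Matrix.smul_mul, Matrix.one_mul, smul_smul, mul_inv_cancel₀ hd, one_smul]⟩
  have hiO : ⅟((x + a) • (1 : Matrix (Fin n × Fin m) (Fin n × Fin m) K)) = (x + a)⁻¹ • 1 :=
    invOf_eq_right_inv
      (by rw [Matrix.smul_mul, Matrix.one_mul, smul_smul, mul_inv_cancel₀ hd, one_smul])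
  have hcard : Fintype.card (Fin n × Fin m) = n * m := by simp
  have hdetD : ((x + a) • (1 : Matrix (Fin n × Fin m) (Fin n × Fin m) K)).det
      = (x + a) ^ (n * m) := by
    rw [Matrix.det_smul, Matrix.det_one, mul_one, hcard]
  have hS : (x • (1 : Matrix (Fin n × Fin m) (Fin n × Fin m) K) - (A' - 1))
      - 1 * ((x + a)⁻¹ • (1 : Matrix (Fin n × Fin m) (Fin n × Fin m) K)) * (-(g • L'))
      = x • 1 - (A' - 1) + ((x + a)⁻¹ * g) • L' := by
    rw [Matrix.one_mul, Matrix.smul_mul, Matrix.one_mul, smul_neg, smul_smul, sub_neg_eq_add]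
  have hnum : (m : K) * ((x + a) * (x + 1)) + g ≠ 0 := by
    intro h0
    apply hc
    rw [show (x + a) * (x + 1) + g / (m : K) = ((m : K) * ((x + a) * (x + 1)) + g) / (m : K) by
      rw [add_div, mul_div_cancel_left₀ _ hmK], h0, zero_div]
  have hfact : (((1 : Matrix (Fin n × Fin m) (Fin n × Fin m) K)
        - (g / ((m : K) * ((x + a) * (x + 1) + g / (m : K)))) • (1 - (m : K) • L'))
      * ((((x + a) * (x + 1) + g / (m : K)) • (1 : Matrix (Fin n × Fin m) (Fin n × Fin m) K))
          - (x + a) • A'))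
      = (x + a) • ((x • (1 : Matrix (Fin n × Fin m) (Fin n × Fin m) K) - (A' - 1))
          - 1 * ((x + a)⁻¹ • (1 : Matrix (Fin n × Fin m) (Fin n × Fin m) K)) * (-(g • L'))) := by
    have hmc : (m : K) * ((x + a) * (x + 1) + g / (m : K))
        = (m : K) * ((x + a) * (x + 1)) + g := by
      rw [mul_add, mul_div_assoc', mul_div_cancel_left₀ _ hmK]
    rw [hS, hmc, Matrix.sub_mul, Matrix.one_mul, Matrix.smul_mul, Matrix.mul_sub, Matrix.mul_smul,
      Matrix.mul_one, Matrix.mul_smul, hE'A', smul_zero, sub_zero]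
    ext p q
    simp only [Matrix.sub_apply, Matrix.add_apply, Matrix.smul_apply, Matrix.one_apply,
      smul_eq_mul]
    have hk1 : g / ((m : K) * ((x + a) * (x + 1)) + g) * ((x + a) * (x + 1) + g / (m : K))
        = g / (m : K) := by
      rw [← hmc, div_mul_eq_mul_div, mul_div_mul_right _ _ hc]
    have hk2 : (x + a) * (x + a)⁻¹ = 1 := mul_inv_cancel₀ hd
    have hk3 : g / (m : K) * (m : K) = g := div_mul_cancel₀ g hmK
    by_cases h : p = q <;> simp only [h, if_true, if_false]
    · linear_combination (-(1 - (m : K) * L' q q)) * hk1 + L' q q * hk3 - g * L' q q * hk2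
    · linear_combination ((m : K) * L' p q) * hk1 + L' p q * hk3 - g * L' p q * hk2
  have hdetE : ∀ t : K, ((1 : Matrix (Fin n × Fin m) (Fin n × Fin m) K)
      - t • ((1 : Matrix (Fin n × Fin m) (Fin n × Fin m) K) - (m : K) • L')).det
      = (1 - t) ^ n := by
    intro t
    have hent : (1 : Matrix (Fin n × Fin m) (Fin n × Fin m) K) - t • (1 - (m : K) • L')
        = Matrix.of (fun p q : Fin n × Fin m =>
            (if p = q then (1 : K) else 0) - (if p.1 = q.1 then t / (m : K) else 0)) := by
      ext p q
      have hE : ((1 : Matrix (Fin n × Fin m) (Fin n × Fin m) K) - (m : K) • L') p q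
          = if p.1 = q.1 then 1 / (m : K) else 0 := by
        rw [← hEmap, Matrix.map_apply, E_apply n m hm0 p q]
        by_cases h : p.1 = q.1 <;> simp [h, map_div₀, hψm]
      simp only [Matrix.sub_apply, Matrix.smul_apply, Matrix.of_apply, hE, smul_eq_mul,
        Matrix.one_apply]
      by_cases h : p.1 = q.1 <;> simp [h, mul_one_div, div_eq_mul_inv]
    rw [hent, det_one_sub_blockconst n m, mul_div_assoc', mul_div_cancel_left₀ _ hmK]
  have hdetA : ((((x + a) * (x + 1) + g / (m : K)) •
          (1 : Matrix (Fin n × Fin m) (Fin n × Fin m) K)) - (x + a) • A').det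
      = (x + a) ^ (n * m) * ((((x + a) * (x + 1) + g / (m : K)) / (x + a)) ^ n *
          ∏ i : Fin ((m - 1) * n),
            (((x + a) * (x + 1) + g / (m : K)) / (x + a) - ψ (μ i / m))) := by
    have h1 : (((x + a) * (x + 1) + g / (m : K)) •
          (1 : Matrix (Fin n × Fin m) (Fin n × Fin m) K)) - (x + a) • A'
        = (x + a) • (((((x + a) * (x + 1) + g / (m : K)) / (x + a)) •
            (1 : Matrix (Fin n × Fin m) (Fin n × Fin m) K)) - A') := by
      rw [smul_sub, smul_smul, mul_div_assoc', mul_div_cancel_left₀ _ hd]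
    rw [h1, Matrix.det_smul, hcard, ← charpoly_eval']
    congr 1
    have hmap : ((X ^ n * ∏ i : Fin ((m - 1) * n), (X - C (μ i / (m : ℝ))) : ℝ[X]).map ψ)
        = X ^ n * ∏ i : Fin ((m - 1) * n), (X - C (ψ (μ i / m))) := by
      rw [Polynomial.map_mul, Polynomial.map_pow, Polynomial.map_X,
        ← Polynomial.coe_mapRingHom, map_prod]
      simp only [map_sub, Polynomial.coe_mapRingHom, Polynomial.map_X, Polynomial.map_C]
    rw [hA'def, Matrix.charpoly_map, hchar, hmap, Polynomial.eval_mul, Polynomial.eval_pow,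
      Polynomial.eval_X, Polynomial.eval_prod]
    simp only [Polynomial.eval_sub, Polynomial.eval_X, Polynomial.eval_C]
  have hRHS : φ ((X + C α) ^ n * (X + C 1) ^ n *
        ∏ i : Fin ((m - 1) * n),
          (X ^ 2 + C (1 + α - μ i / m) * X + C (ga / m + α * (1 - μ i / m))))
      = (x + a) ^ n * (x + 1) ^ n *
        ∏ i : Fin ((m - 1) * n),
          (x ^ 2 + (1 + a - ψ (μ i / m)) * x + (g / (m : K) + a * (1 - ψ (μ i / m)))) := by
    rw [_root_.map_mul, _root_.map_mul, map_pow, map_pow, hdφ, map_add, hφC,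
      _root_.map_one, map_prod]
    congr 1
    refine Finset.prod_congr rfl fun i _ => ?_
    rw [map_add, map_add, _root_.map_mul, map_pow, hφC, hφC]
    rw [show ψ (1 + α - μ i / m) = 1 + a - ψ (μ i / m) by
      rw [map_sub, map_add, _root_.map_one]]
    rw [show ψ (ga / m + α * (1 - μ i / m)) = g / (m : K) + a * (1 - ψ (μ i / m)) by
      rw [map_add, map_div₀, hψm, _root_.map_mul, map_sub, _root_.map_one]]
  rw [hdet1, Matrix.det_fromBlocks₂₂, hiO, hdetD]
  rw [← hcard, ← Matrix.det_smul, ← hfact, Matrix.det_mul, hdetE, hdetA, hRHS]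
  exact scalar_key n m hm x a g (fun i => ψ (μ i / m)) hmK hd hc
end

section
/- Let m ≥ 2 be an integer, α ∈ (0,1), ḡ_a > 0, and let μ ∈ ℝ satisfy μ ≤ m(1 − α). Then every complex root z of the quadratic z² + (1 + α − μ/m) z + (ḡ_a/m + α(1 − μ/m)) = 0 satisfies Re z ≤ −α. Consequently, if the largest nonzero-branch eigenvalue μ_1 of the system's linearization satisfies μ_1 ≤ m(1−α), all eigenvalues ν_{i,±} (1 ≤ i ≤ (m−1)n) of the Jacobian H coming from these quadratics have real part at most −α. -/
/-- Lemma 3, part (1): if `μ ≤ m(1−α)`, every complex root `z` of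
`z² + (1+α−μ/m) z + (ḡ_a/m + α(1−μ/m)) = 0` satisfies `Re z ≤ −α`. -/
theorem stmt9 (m : ℕ) (hm : 2 ≤ m) (α ga μ : ℝ)
    (hα : α ∈ Set.Ioo (0 : ℝ) 1) (hga : 0 < ga)
    (hμ : μ ≤ (m : ℝ) * (1 - α)) :
    ∀ z : ℂ,
      z ^ 2 + (((1 + α - μ / m : ℝ) : ℂ)) * z + (((ga / m + α * (1 - μ / m) : ℝ) : ℂ)) = 0 →
      z.re ≤ -α := by
  obtain ⟨hα0, hα1⟩ := hα
  have hm2 : (2:ℝ) ≤ (m:ℝ) := by exact_mod_cast hm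
  have hmpos : (0:ℝ) < (m:ℝ) := by linarith
  have hs : α ≤ 1 - μ / (m:ℝ) := by
    have : μ / (m:ℝ) ≤ 1 - α := by
      rw [div_le_iff₀ hmpos]; linarith
    linarith
  intro z hz
  set x := z.re with hx
  set y := z.im with hy
  have hre := congrArg Complex.re hz
  have him := congrArg Complex.im hz
  simp [pow_two, Complex.mul_re, Complex.mul_im, Complex.add_re, Complex.add_im] at hre him
  -- hre : x*x - y*y + (1+α-μ/m)*x + (ga/m + α*(1-μ/m)) = 0 (up to form)
  have hfac : y * (2*x + (1 + α - μ/(m:ℝ))) = 0 := by linear_combination him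
  rcases mul_eq_zero.mp hfac with hy0 | hx0
  · by_contra hcon
    push_neg at hcon
    have h1 : 0 < x + α := by linarith
    have h2 : 0 < x + (1 - μ/(m:ℝ)) := by linarith
    have h3 : 0 < ga / (m:ℝ) := by positivity
    nlinarith [mul_pos h1 h2, hre, hy0]
  · linarith
end

section
/- Let m ≥ 2 be an integer, α ∈ (0,1), and let μ_1 ∈ ℝ satisfy μ_1 > m(1 − α), and suppose ḡ_a > m(μ_1/m + α − 1)²/4. Then: (i) for every real μ ≤ μ_1, every complex root z of z² + (1 + α − μ/m) z + (ḡ_a/m + α(1 − μ/m)) = 0 satisfies Re z ≤ (μ_1 − m(1+α))/(2m); (ii) for μ = μ_1 the two roots are non-real complex conjugates with real part exactly (μ_1 − m(1+α))/(2m). Hence the maximum real part over the eigenvalues ν_{i,±} of the Jacobian H coming from these quadratics equals (μ_1 − m(1+α))/(2m). -/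
lemma quad_parts (b c : ℝ) (z : ℂ) (hz : z ^ 2 + ((b:ℝ):ℂ) * z + ((c:ℝ):ℂ) = 0) :
    z.re^2 - z.im^2 + b*z.re + c = 0 ∧ 2*z.re*z.im + b*z.im = 0 := by
  rw [Complex.ext_iff] at hz
  simp [pow_two, Complex.mul_re, Complex.mul_im] at hz
  constructor <;> [nlinarith [hz.1]; nlinarith [hz.2]]

set_option maxHeartbeats 1000000 in
/-- Lemma 3, part (2): if `μ₁ > m(1−α)` and `ḡ_a > m(μ₁/m+α−1)²/4`, then
(i) for every `μ ≤ μ₁` all complex roots of the block quadratic have real part at most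
`(μ₁ − m(1+α))/(2m)`, and (ii) for `μ = μ₁` the two roots are non-real complex conjugates
with real part exactly `(μ₁ − m(1+α))/(2m)`. -/
theorem stmt10 (m : ℕ) (hm : 2 ≤ m) (α ga μ1 : ℝ)
    (hα : α ∈ Set.Ioo (0 : ℝ) 1) (hga0 : 0 < ga)
    (hμ1 : (m : ℝ) * (1 - α) < μ1)
    (hga : (m : ℝ) * (μ1 / m + α - 1) ^ 2 / 4 < ga) :
    (∀ μ : ℝ, μ ≤ μ1 → ∀ z : ℂ,
      z ^ 2 + (((1 + α - μ / m : ℝ) : ℂ)) * z + (((ga / m + α * (1 - μ / m) : ℝ) : ℂ)) = 0 →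
      z.re ≤ (μ1 - m * (1 + α)) / (2 * m)) ∧
    (∀ z : ℂ,
      z ^ 2 + (((1 + α - μ1 / m : ℝ) : ℂ)) * z + (((ga / m + α * (1 - μ1 / m) : ℝ) : ℂ)) = 0 →
      z.re = (μ1 - m * (1 + α)) / (2 * m) ∧ z.im ≠ 0 ∧
        (starRingEnd ℂ z) ^ 2 + (((1 + α - μ1 / m : ℝ) : ℂ)) * starRingEnd ℂ z +
          (((ga / m + α * (1 - μ1 / m) : ℝ) : ℂ)) = 0) := by
  obtain ⟨hα0, hα1⟩ := hα
  have hm0 : (0:ℝ) < m := by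
    have : (2:ℝ) ≤ m := by exact_mod_cast hm
    linarith
  -- scaled discriminant hypothesis : (μ1 + m*α - m)^2 < 4*m*ga
  have hQ : 0 < μ1 + (m:ℝ)*α - m := by nlinarith
  have hga' : (μ1 + (m:ℝ)*α - m)^2 < 4*m*ga := by
    have h1 : (m:ℝ) * (μ1 / m + α - 1) ^ 2 = (μ1 + (m:ℝ)*α - m)^2 / m := by
      field_simp
    have h2 : (μ1 + (m:ℝ)*α - m)^2 / m < 4 * ga := by rw [← h1]; linarith
    have h3 : (μ1 + (m:ℝ)*α - m)^2 < 4*ga*m := (div_lt_iff₀ hm0).1 h2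
    rw [show 4*(m:ℝ)*ga = 4*ga*m by ring]; exact h3
  have key1 : ∀ μ : ℝ, (m:ℝ)*(ga/m + α*(1-μ/m)) = ga + α*((m:ℝ)-μ) := by
    intro μ; field_simp
  have key2 : ∀ μ : ℝ, (m:ℝ)*(1+α-μ/m) = (m:ℝ)*(1+α) - μ := by
    intro μ; field_simp
  constructor
  · intro μ hμ z hz
    obtain ⟨hre, him⟩ := quad_parts _ _ _ hz
    rcases mul_eq_zero.1 (show z.im * (2*z.re + (1 + α - μ/m)) = 0 by linarith) with hy | hx
    · -- real root case
      rw [le_div_iff₀ (by positivity)]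
      have hre' : (m:ℝ)*z.re^2 + ((m:ℝ)*(1+α) - μ)*z.re + (ga + α*(m - μ)) = 0 := by
        rw [hy] at hre
        linear_combination (m:ℝ)*hre - z.re*(key2 μ) - key1 μ
      nlinarith [sq_nonneg (2*(m:ℝ)*z.re - (μ1 - m*(1+α))), mul_nonneg (sub_nonneg.2 hμ) hQ.le,
        sq_nonneg ((m:ℝ)*z.re)]
    · -- complex case: 2 re + b = 0
      have : z.re = (μ/m - 1 - α)/2 := by linarith
      rw [this, div_le_div_iff₀ (by norm_num) (by positivity)]
      have : μ / m * (2*m) = 2*μ := by field_simp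
      nlinarith [hμ, hm0]
  · intro z hz
    obtain ⟨hre, him⟩ := quad_parts _ _ _ hz
    have him0 : z.im ≠ 0 := by
      intro hy
      rw [hy] at hre
      have hre' : (m:ℝ)*z.re^2 + ((m:ℝ)*(1+α) - μ1)*z.re + (ga + α*(m - μ1)) = 0 := by
        linear_combination (m:ℝ)*hre - z.re*(key2 μ1) - key1 μ1
      nlinarith [sq_nonneg (2*(m:ℝ)*z.re + ((m:ℝ)*(1+α) - μ1)), hga']
    have hx : 2*z.re + (1 + α - μ1/m) = 0 := by
      rcases mul_eq_zero.1 (show z.im * (2*z.re + (1 + α - μ1/m)) = 0 by linarith) with h | h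
      · exact absurd h him0
      · exact h
    refine ⟨?_, him0, ?_⟩
    · rw [eq_div_iff (by positivity : (2*(m:ℝ)) ≠ 0)]
      linear_combination (m:ℝ)*hx - key2 μ1
    · have h := congrArg (starRingEnd ℂ) hz
      rw [map_add, map_add, map_mul, map_pow, map_zero, Complex.conj_ofReal,
        Complex.conj_ofReal] at h
      exact h
end

section
/- Under Assumptions 1–3, let μ_1/m be the largest eigenvalue of WΛ among those not belonging to the 0-eigenspace spanned by the vectors ε_k ⊗ 𝟙_m, α ∈ (0,1), and suppose ḡ_a > m(μ_1/m + α − 1)²/4. If μ_1 < m(1 + α), then every eigenvalue of the 2mn×2mn matrix H = [[WΛ − I, −I], [ḡ_a Λ, −α I]] has strictly negative real part (so the origin is a locally exponentially stable equilibrium of the free recall system). -/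
open scoped BigOperators
open Matrix Polynomial

section helpers

lemma quad_re_neg {b c : ℝ} (hb : 0 < b) (hc : 0 < c) {z : ℂ}
    (h : z*z + (b:ℂ)*z + (c:ℂ) = 0) : z.re < 0 := by
  by_contra hre
  push_neg at hre
  have hIm : z.im * (2*z.re + b) = 0 := by
    have := congrArg Complex.im h
    simp [Complex.add_im, Complex.mul_im, Complex.ofReal_im, Complex.ofReal_re] at this
    nlinarith [this]
  have hRe : z.re*z.re - z.im*z.im + b*z.re + c = 0 := by
    have := congrArg Complex.re h
    simp [Complex.add_re, Complex.mul_re, Complex.ofReal_im, Complex.ofReal_re] at this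
    nlinarith [this]
  have h2 : 2*z.re + b > 0 := by linarith
  have him0 : z.im = 0 := by
    rcases mul_eq_zero.mp hIm with h' | h'
    · exact h'
    · linarith
  nlinarith

lemma eval_charpoly' {ι : Type*} [DecidableEq ι] [Fintype ι] {R : Type*} [CommRing R]
    (M : Matrix ι ι R) (x : R) :
    (M.charpoly).eval x = (x • (1 : Matrix ι ι R) - M).det := by
  rw [Matrix.charpoly, ← Polynomial.coe_evalRingHom, RingHom.map_det]
  congr 1
  ext i j
  by_cases h : i = j <;>
    simp [h, Matrix.charmatrix_apply, Matrix.one_apply, Matrix.diagonal_apply]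

def Bmat (n m : ℕ) : Matrix (Fin n × Fin m) (Fin n × Fin m) ℝ :=
  Matrix.of fun p q => if p.1 = q.1 then 1 else 0

lemma Lam_eq (n m : ℕ) :
    Lam n m = ((m:ℝ))⁻¹ • (1 : Matrix (Fin n × Fin m) (Fin n × Fin m) ℝ)
      - (((m:ℝ))^2)⁻¹ • Bmat n m := by
  ext p q
  simp only [Lam, Bmat, Matrix.of_apply, Matrix.sub_apply, Matrix.smul_apply,
    Matrix.one_apply, smul_eq_mul]
  by_cases h1 : p.1 = q.1 <;> by_cases h2 : p.2 = q.2 <;>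
    simp [h1, h2, Prod.ext_iff, one_div]

lemma Bmat_mul_Bmat (n m : ℕ) : Bmat n m * Bmat n m = (m:ℝ) • Bmat n m := by
  ext p q
  simp only [Matrix.mul_apply, Bmat, Matrix.of_apply, Matrix.smul_apply, smul_eq_mul]
  rw [Fintype.sum_prod_type]
  simp [Finset.sum_ite_eq, mul_ite, ite_mul]
  by_cases h : p.1 = q.1 <;> simp [h]

lemma Bmat_comm_W (n m : ℕ)
    (W : Matrix (Fin n × Fin m) (Fin n × Fin m) ℝ)
    (lam : Fin n → Fin n → ℝ)
    (hsymm : W.IsSymm)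
    (hA2 : ∀ (i k : Fin n) (j : Fin m), ∑ l : Fin m, W (i, j) (k, l) = lam i k)
    (hA3 : ∀ i k : Fin n, lam i k = lam k i) :
    Bmat n m * W = W * Bmat n m := by
  have hsym' : ∀ p q, W p q = W q p := fun p q => by
    conv_lhs => rw [← hsymm]
    rfl
  ext p q
  simp only [Matrix.mul_apply, Bmat, Matrix.of_apply]
  rw [Fintype.sum_prod_type, Fintype.sum_prod_type]
  simp only [ite_mul, mul_ite, one_mul, mul_one, zero_mul, mul_zero,
    Finset.sum_ite_eq, Finset.sum_ite_eq', Finset.mem_univ, if_true]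
  have h1 : ∑ l : Fin m, W (p.1, l) q = lam p.1 q.1 := by
    calc ∑ l : Fin m, W (p.1, l) q = ∑ l : Fin m, W (q.1, q.2) (p.1, l) := by
          refine Finset.sum_congr rfl fun l _ => ?_
          rw [hsym' (p.1, l) q]
      _ = lam q.1 p.1 := hA2 q.1 p.1 q.2
      _ = lam p.1 q.1 := (hA3 p.1 q.1).symm
  have h2 : ∑ l : Fin m, W p (q.1, l) = lam p.1 q.1 := hA2 p.1 q.1 p.2
  have e1 : (∑ x : Fin n, ∑ y : Fin m, if p.1 = x then W (x, y) q else 0)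
      = ∑ y : Fin m, W (p.1, y) q := by
    rw [Finset.sum_comm]
    refine Finset.sum_congr rfl fun y _ => ?_
    simp [Finset.sum_ite_eq]
  have e2 : (∑ x : Fin n, ∑ y : Fin m, if x = q.1 then W p (x, y) else 0)
      = ∑ y : Fin m, W p (q.1, y) := by
    rw [Finset.sum_comm]
    refine Finset.sum_congr rfl fun y _ => ?_
    simp [Finset.sum_ite_eq']
  rw [e1, e2, h1, h2]

lemma Lam_mul_Lam (n m : ℕ) (hm : 2 ≤ m) :
    Lam n m * Lam n m = ((m:ℝ))⁻¹ • Lam n m := by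
  have hm0 : (m:ℝ) ≠ 0 := by positivity
  rw [Lam_eq]
  rw [sub_mul, mul_sub, mul_sub]
  simp only [smul_mul_assoc, mul_smul_comm, one_mul, mul_one, Bmat_mul_Bmat, smul_sub,
    smul_smul]
  ext p q
  simp only [Matrix.sub_apply, Matrix.smul_apply, smul_eq_mul]
  field_simp
  ring

lemma Lam_comm_W (n m : ℕ)
    (W : Matrix (Fin n × Fin m) (Fin n × Fin m) ℝ)
    (lam : Fin n → Fin n → ℝ)
    (hsymm : W.IsSymm)
    (hA2 : ∀ (i k : Fin n) (j : Fin m), ∑ l : Fin m, W (i, j) (k, l) = lam i k)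
    (hA3 : ∀ i k : Fin n, lam i k = lam k i) :
    Lam n m * W = W * Lam n m := by
  rw [Lam_eq, sub_mul, mul_sub, smul_mul_assoc, smul_mul_assoc, mul_smul_comm, mul_smul_comm,
    one_mul, mul_one, Bmat_comm_W n m W lam hsymm hA2 hA3]

lemma mapRealSmul {ι : Type*} (r : ℝ) (M : Matrix ι ι ℝ) :
    (r • M).map (algebraMap ℝ ℂ) = (r:ℂ) • M.map (algebraMap ℝ ℂ) := by
  ext p q
  simp [Matrix.map_apply, Matrix.smul_apply, Complex.coe_algebraMap]

end helpers

/-- Under Assumptions 1–3, with `μ₁/m` the largest eigenvalue of `WΛ` among those not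
belonging to the `0`-eigenvalue branch of multiplicity `n` (encoded by the characteristic
polynomial factorization), if `ḡ_a > m(μ₁/m+α−1)²/4` and `μ₁ < m(1+α)`, then every
(complex) eigenvalue of `H = [[WΛ − I, −I], [ḡ_a Λ, −α I]]` has strictly negative real
part. -/
theorem stmt11 (n m : ℕ) (hn : 1 ≤ n) (hm : 2 ≤ m)
    (α ga : ℝ) (hα : α ∈ Set.Ioo (0 : ℝ) 1) (hga0 : 0 < ga)
    (W : Matrix (Fin n × Fin m) (Fin n × Fin m) ℝ)
    (lam : Fin n → Fin n → ℝ)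
    (hsymm : W.IsSymm)
    (hdiag : ∀ (i : Fin n) (j l : Fin m), W (i, j) (i, l) = 0)
    (hA2 : ∀ (i k : Fin n) (j : Fin m), ∑ l : Fin m, W (i, j) (k, l) = lam i k)
    (hA3 : ∀ i k : Fin n, lam i k = lam k i)
    (μ : Fin ((m - 1) * n) → ℝ) (μ1 : ℝ)
    (hchar : (W * Lam n m).charpoly =
      X ^ n * ∏ i : Fin ((m - 1) * n), (X - C (μ i / m)))
    (hmax : ∀ i, μ i ≤ μ1) (hmem : ∃ i, μ i = μ1)
    (hga : (m : ℝ) * (μ1 / m + α - 1) ^ 2 / 4 < ga)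
    (hμ1 : μ1 < (m : ℝ) * (1 + α)) :
    ∀ z : ℂ,
      Polynomial.aeval z
        ((Matrix.fromBlocks (W * Lam n m - 1) (-1) (ga • Lam n m)
          (-(α • (1 : Matrix (Fin n × Fin m) (Fin n × Fin m) ℝ)))).charpoly) = 0 →
      z.re < 0 := by
  intro z hz
  obtain ⟨hα0, hα1⟩ := hα
  have hmpos : (0:ℝ) < m := by positivity
  have hm0 : (m:ℝ) ≠ 0 := ne_of_gt hmpos
  have hm0c : (m:ℂ) ≠ 0 := by exact_mod_cast (Nat.cast_ne_zero (R := ℂ)).mpr (by omega)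
  have hbpos : ∀ i : Fin ((m - 1) * n), (0:ℝ) < 1 + α - μ i / m := by
    intro i
    have : μ i / m < 1 + α := by
      rw [div_lt_iff₀ hmpos]
      nlinarith [hmax i]
    linarith
  have hcpos : ∀ i : Fin ((m - 1) * n), (0:ℝ) < α * (1 - μ i / m) + ga / m := by
    intro i
    have hs : μ i / m ≤ μ1 / m := by gcongr; exact hmax i
    have hg : (μ1/m + α - 1)^2 / 4 < ga / m := by
      rw [lt_div_iff₀ hmpos]
      nlinarith [hga]
    have key1 : 0 ≤ α * (1 - μ1/m) + (μ1/m + α - 1)^2/4 := by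
      nlinarith [sq_nonneg (α - (μ1/m + α - 1)/2)]
    have key2 : α * (1 - μ1/m) ≤ α * (1 - μ i/m) := by
      nlinarith [mul_nonneg (le_of_lt hα0) (sub_nonneg.mpr hs)]
    linarith [hg]
  set f : ℝ →+* ℂ := algebraMap ℝ ℂ with hf
  set A : Matrix (Fin n × Fin m) (Fin n × Fin m) ℂ := (W * Lam n m).map f with hA
  set L : Matrix (Fin n × Fin m) (Fin n × Fin m) ℂ := (Lam n m).map f with hL
  -- complex commutation identities
  have rAL : (W * Lam n m) * Lam n m = ((m:ℝ))⁻¹ • (W * Lam n m) := by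
    rw [mul_assoc, Lam_mul_Lam n m hm, mul_smul_comm]
  have rLA : Lam n m * (W * Lam n m) = ((m:ℝ))⁻¹ • (W * Lam n m) := by
    rw [← mul_assoc, Lam_comm_W n m W lam hsymm hA2 hA3, rAL]
  have cAL : A * L = (m:ℂ)⁻¹ • A := by
    rw [hA, hL, ← Matrix.map_mul, rAL, mapRealSmul]
    push_cast
    rfl
  have cLA : L * A = (m:ℂ)⁻¹ • A := by
    rw [hA, hL, ← Matrix.map_mul, rLA, mapRealSmul]
    push_cast
    rfl
  have cLL : L * L = (m:ℂ)⁻¹ • L := by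
    rw [hL, ← Matrix.map_mul, Lam_mul_Lam n m hm, mapRealSmul]
    push_cast
    rfl
  -- the complex block matrix
  set Hc : Matrix ((Fin n × Fin m) ⊕ (Fin n × Fin m)) ((Fin n × Fin m) ⊕ (Fin n × Fin m)) ℂ :=
    Matrix.fromBlocks (A - 1) (-1) ((ga:ℂ) • L) (-((α:ℂ) • 1)) with hHc
  have hmap : (Matrix.fromBlocks (W * Lam n m - 1) (-1) (ga • Lam n m)
      (-(α • (1 : Matrix (Fin n × Fin m) (Fin n × Fin m) ℝ)))).map f = Hc := by
    have hb11 : (W * Lam n m - 1).map ⇑f = A - 1 := by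
      calc (W * Lam n m - 1).map ⇑f = f.mapMatrix (W * Lam n m - 1) := rfl
        _ = f.mapMatrix (W * Lam n m) - f.mapMatrix 1 := map_sub _ _ _
        _ = A - 1 := by rw [_root_.map_one]; rfl
    have hb12 : ((-1 : Matrix (Fin n × Fin m) (Fin n × Fin m) ℝ)).map ⇑f = -1 := by
      calc ((-1 : Matrix (Fin n × Fin m) (Fin n × Fin m) ℝ)).map ⇑f
          = f.mapMatrix (-1) := rfl
        _ = -(f.mapMatrix 1) := map_neg _ _
        _ = -1 := by rw [_root_.map_one]
    have hb21 : (ga • Lam n m).map ⇑f = (ga:ℂ) • L := mapRealSmul ga (Lam n m)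
    have hb22 : ((-(α • (1 : Matrix (Fin n × Fin m) (Fin n × Fin m) ℝ)))).map ⇑f
        = -((α:ℂ) • (1 : Matrix (Fin n × Fin m) (Fin n × Fin m) ℂ)) := by
      calc ((-(α • (1 : Matrix (Fin n × Fin m) (Fin n × Fin m) ℝ)))).map ⇑f
          = f.mapMatrix (-(α • 1)) := rfl
        _ = -(f.mapMatrix (α • 1)) := map_neg _ _
        _ = -((α • (1 : Matrix (Fin n × Fin m) (Fin n × Fin m) ℝ)).map ⇑f) := rfl
        _ = -((α:ℂ) • ((1 : Matrix (Fin n × Fin m) (Fin n × Fin m) ℝ)).map ⇑f) := by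
            rw [mapRealSmul]
        _ = -((α:ℂ) • (1 : Matrix (Fin n × Fin m) (Fin n × Fin m) ℂ)) := by
            have : ((1 : Matrix (Fin n × Fin m) (Fin n × Fin m) ℝ)).map ⇑f
                = (1 : Matrix (Fin n × Fin m) (Fin n × Fin m) ℂ) := by
              calc ((1 : Matrix (Fin n × Fin m) (Fin n × Fin m) ℝ)).map ⇑f
                  = f.mapMatrix 1 := rfl
                _ = 1 := _root_.map_one _
            rw [this]
    rw [Matrix.fromBlocks_map, hHc, hb11, hb12, hb21, hb22]
  -- det (z • 1 - Hc) = 0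
  have hdet : (z • (1 : Matrix ((Fin n × Fin m) ⊕ (Fin n × Fin m))
      ((Fin n × Fin m) ⊕ (Fin n × Fin m)) ℂ) - Hc).det = 0 := by
    rw [← eval_charpoly', ← hmap, Matrix.charpoly_map, Polynomial.eval_map,
      ← Polynomial.aeval_def]
    exact hz
  obtain ⟨v, hv0, hmv⟩ := (Matrix.exists_mulVec_eq_zero_iff).mpr hdet
  rw [Matrix.sub_mulVec, Matrix.smul_mulVec, Matrix.one_mulVec, sub_eq_zero] at hmv
  set u : (Fin n × Fin m) → ℂ := v ∘ Sum.inl with hu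
  set w : (Fin n × Fin m) → ℂ := v ∘ Sum.inr with hw
  have hbv := Matrix.fromBlocks_mulVec (A - 1) (-1) ((ga:ℂ) • L) (-((α:ℂ) • 1)) v
  rw [← hmv] at hbv
  have E1 : ∀ i, A.mulVec u i = u i + w i + z * u i := by
    intro i
    have := congrFun hbv (Sum.inl i)
    simp only [Sum.elim_inl, Pi.add_apply, Matrix.sub_mulVec, Matrix.one_mulVec,
      Matrix.neg_mulVec, Pi.sub_apply, Pi.neg_apply, Pi.smul_apply,
      smul_eq_mul, ← hu, ← hw] at this
    have hux : v (Sum.inl i) = u i := rfl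
    rw [hux] at this
    linear_combination -this
  have E2 : ∀ i, (ga:ℂ) * L.mulVec u i = α * w i + z * w i := by
    intro i
    have := congrFun hbv (Sum.inr i)
    simp only [Sum.elim_inr, Pi.add_apply, Matrix.smul_mulVec, Matrix.neg_mulVec,
      Matrix.one_mulVec, Pi.neg_apply, Pi.smul_apply,
      smul_eq_mul, ← hu, ← hw] at this
    have hwx : v (Sum.inr i) = w i := rfl
    rw [hwx] at this
    linear_combination -this
  set p : (Fin n × Fin m) → ℂ := A.mulVec u with hp
  set q : (Fin n × Fin m) → ℂ := L.mulVec u with hq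
  -- case z = -α
  by_cases hza : z + (α:ℂ) = 0
  · have : z = -(α:ℂ) := by linear_combination hza
    rw [this]
    simpa using hα0
  -- commutation applied to vectors
  have cALv : A.mulVec q = (m:ℂ)⁻¹ • p := by
    rw [hq, hp, Matrix.mulVec_mulVec, cAL, Matrix.smul_mulVec]
  have cLLv : L.mulVec q = (m:ℂ)⁻¹ • q := by
    rw [hq, Matrix.mulVec_mulVec, cLL, Matrix.smul_mulVec]
  -- key vector identity
  have keyf : (z + α) • p = ((z+α)*(z+1)) • u + (ga:ℂ) • q := by
    funext i
    simp only [Pi.add_apply, Pi.smul_apply, smul_eq_mul]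
    linear_combination (z + (α:ℂ)) * (E1 i) - E2 i
  -- the quadratic root helper for the "0-eigenvalue / kernel" branch
  have quad0 : ((z+α)*(z+1) + (ga:ℂ) * (m:ℂ)⁻¹ = 0) → z.re < 0 := by
    intro h0
    have hb : (0:ℝ) < 1 + α := by linarith
    have hc : (0:ℝ) < α + ga / m := by positivity
    refine quad_re_neg hb hc ?_
    push_cast
    field_simp at h0 ⊢
    linear_combination h0
  by_cases hpz : p = 0
  · -- A u = 0
    rw [hpz] at keyf
    have keyq : ∀ i, (0:ℂ) = ((z+α)*(z+1)) * q i + (ga:ℂ) * ((m:ℂ)⁻¹ * q i) := by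
      intro i
      have h := congrArg (fun x => L.mulVec x i) keyf
      simp only [Matrix.mulVec_add, Matrix.mulVec_smul, cLLv, Matrix.mulVec_zero, ← hq,
        Pi.add_apply, Pi.smul_apply, Pi.zero_apply, smul_eq_mul, smul_zero] at h
      linear_combination h
    by_cases hqz : q = 0
    · -- both p and q vanish
      rw [hqz] at keyf
      have hu0 : u ≠ 0 := by
        intro h
        apply hv0
        have hw0 : w = 0 := by
          funext i
          have e := E1 i
          rw [h, hpz] at e
          have : (0:ℂ) = w i := by simpa using e
          exact this.symm
        funext i
        cases i with
        | inl i => exact congrFun h i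
        | inr i => exact congrFun hw0 i
      obtain ⟨i, hui⟩ := Function.ne_iff.mp hu0
      have := congrFun keyf i
      simp only [Pi.add_apply, Pi.smul_apply, smul_eq_mul, hqz, Pi.zero_apply, mul_zero,
        add_zero] at this
      have hz1 : z + 1 = 0 := by
        rcases mul_eq_zero.mp (by linear_combination -this : ((z+α)*(z+1)) * u i = 0) with h | h
        · rcases mul_eq_zero.mp h with h' | h'
          · exact absurd h' hza
          · exact h'
        · exact absurd h hui
      have : z = -1 := by linear_combination hz1
      rw [this]
      norm_num
    · obtain ⟨i, hqi⟩ := Function.ne_iff.mp hqz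
      have := keyq i
      have h0 : (z+α)*(z+1) + (ga:ℂ) * (m:ℂ)⁻¹ = 0 := by
        have hfac : ((z+α)*(z+1) + (ga:ℂ) * (m:ℂ)⁻¹) * q i = 0 := by linear_combination -this
        rcases mul_eq_zero.mp hfac with h | h
        · exact h
        · exact absurd h hqi
      exact quad0 h0
  · -- p ≠ 0 : eigenvector of A
    have keyA : (z + α) • A.mulVec p
        = ((z+α)*(z+1) + (ga:ℂ) * (m:ℂ)⁻¹) • p := by
      have := congrArg (fun x => A.mulVec x) keyf
      simp only [Matrix.mulVec_smul, Matrix.mulVec_add, cALv, ← hp] at this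
      rw [this]
      funext i
      simp only [Pi.add_apply, Pi.smul_apply, smul_eq_mul]
      ring
    set a : ℂ := ((z+α)*(z+1) + (ga:ℂ) * (m:ℂ)⁻¹) / (z + α) with ha
    have haeq : a * (z + α) = (z+α)*(z+1) + (ga:ℂ) * (m:ℂ)⁻¹ := by
      rw [ha]; field_simp
    have hAp : A.mulVec p = a • p := by
      funext i
      have := congrFun keyA i
      simp only [Pi.smul_apply, smul_eq_mul] at this ⊢
      field_simp [hm0c] at this
      rw [ha]
      field_simp
      linear_combination this
    have hdet2 : ((a • (1 : Matrix (Fin n × Fin m) (Fin n × Fin m) ℂ)) - A).det = 0 := by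
      rw [← Matrix.exists_mulVec_eq_zero_iff]
      refine ⟨p, hpz, ?_⟩
      rw [Matrix.sub_mulVec, Matrix.smul_mulVec, Matrix.one_mulVec, hAp, sub_self]
    have hroot : a ^ n * ∏ i : Fin ((m - 1) * n), (a - ((μ i / m : ℝ) : ℂ)) = 0 := by
      have h1 : (A.charpoly).eval a = 0 := by rw [eval_charpoly', hdet2]
      rw [hA, Matrix.charpoly_map, Polynomial.eval_map, ← Polynomial.aeval_def, hchar] at h1
      simpa [map_pow, map_prod, map_sub, Polynomial.aeval_X, Polynomial.aeval_C] using h1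
    have hcases : a = 0 ∨ ∃ i : Fin ((m - 1) * n), a = ((μ i / m : ℝ) : ℂ) := by
      rcases mul_eq_zero.mp hroot with h | h
      · left
        exact pow_eq_zero_iff (by omega) |>.mp h
      · right
        obtain ⟨i, _, hi⟩ := Finset.prod_eq_zero_iff.mp h
        exact ⟨i, by linear_combination hi⟩
    rcases hcases with h0 | ⟨i, hi⟩
    · apply quad0
      rw [h0] at haeq
      linear_combination -haeq
    · -- a = μ i / m
      refine quad_re_neg (hbpos i) (hcpos i) ?_
      rw [hi] at haeq
      push_cast at haeq ⊢
      field_simp at haeq ⊢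
      linear_combination -haeq
end

section
/- Under Assumptions 1–3, let μ_1/m be the largest eigenvalue of WΛ among those not belonging to the 0-eigenspace spanned by the vectors ε_k ⊗ 𝟙_m, α ∈ (0,1), and suppose ḡ_a > m(μ_1/m + α − 1)²/4. If μ_1 > m(1 + α), then the 2mn×2mn matrix H = [[WΛ − I, −I], [ḡ_a Λ, −α I]] has a pair of non-real complex conjugate eigenvalues with real part (μ_1 − m(1+α))/(2m) > 0; in particular H has an eigenvalue with strictly positive real part (so the origin is an unstable equilibrium of the free recall system). -/
open scoped BigOperators
open Matrix Polynomial

lemma my_eval_charpoly {ι : Type*} [Fintype ι] [DecidableEq ι] {R : Type*} [CommRing R]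
    (M : Matrix ι ι R) (t : R) : M.charpoly.eval t = (t • (1 : Matrix ι ι R) - M).det := by
  rw [Matrix.charpoly, ← Polynomial.coe_evalRingHom, RingHom.map_det]
  congr 1
  ext i j
  by_cases h : i = j <;>
    simp [Matrix.charmatrix_apply, h, Matrix.one_apply, Matrix.diagonal_apply]

lemma my_aeval_conj (p : ℝ[X]) (z : ℂ) :
    Polynomial.aeval (starRingEnd ℂ z) p = starRingEnd ℂ (Polynomial.aeval z p) := by
  rw [← Complex.conjAe_coe]
  exact (Polynomial.aeval_algHom_apply Complex.conjAe.toAlgHom z p)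

/-- Under Assumptions 1–3, with `μ₁/m` the largest eigenvalue of `WΛ` among those not
belonging to the `0`-eigenvalue branch of multiplicity `n`, if `ḡ_a > m(μ₁/m+α−1)²/4`
and `μ₁ > m(1+α)`, then `H = [[WΛ − I, −I], [ḡ_a Λ, −α I]]` has a pair of non-real
complex conjugate eigenvalues with real part `(μ₁ − m(1+α))/(2m) > 0`. -/
theorem stmt12 (n m : ℕ) (hn : 1 ≤ n) (hm : 2 ≤ m)
    (α ga : ℝ) (hα : α ∈ Set.Ioo (0 : ℝ) 1) (hga0 : 0 < ga)
    (W : Matrix (Fin n × Fin m) (Fin n × Fin m) ℝ)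
    (lam : Fin n → Fin n → ℝ)
    (hsymm : W.IsSymm)
    (hdiag : ∀ (i : Fin n) (j l : Fin m), W (i, j) (i, l) = 0)
    (hA2 : ∀ (i k : Fin n) (j : Fin m), ∑ l : Fin m, W (i, j) (k, l) = lam i k)
    (hA3 : ∀ i k : Fin n, lam i k = lam k i)
    (μ : Fin ((m - 1) * n) → ℝ) (μ1 : ℝ)
    (hchar : (W * Lam n m).charpoly =
      X ^ n * ∏ i : Fin ((m - 1) * n), (X - C (μ i / m)))
    (hmax : ∀ i, μ i ≤ μ1) (hmem : ∃ i, μ i = μ1)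
    (hga : (m : ℝ) * (μ1 / m + α - 1) ^ 2 / 4 < ga)
    (hμ1 : (m : ℝ) * (1 + α) < μ1) :
    ∃ z : ℂ,
      Polynomial.aeval z
        ((Matrix.fromBlocks (W * Lam n m - 1) (-1) (ga • Lam n m)
          (-(α • (1 : Matrix (Fin n × Fin m) (Fin n × Fin m) ℝ)))).charpoly) = 0 ∧
      Polynomial.aeval (starRingEnd ℂ z)
        ((Matrix.fromBlocks (W * Lam n m - 1) (-1) (ga • Lam n m)
          (-(α • (1 : Matrix (Fin n × Fin m) (Fin n × Fin m) ℝ)))).charpoly) = 0 ∧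
      z.im ≠ 0 ∧ z.re = (μ1 - m * (1 + α)) / (2 * m) ∧ 0 < z.re := by
  obtain ⟨hα0, hα1⟩ := hα
  have hm0 : (0 : ℝ) < m := by
    have : (2 : ℝ) ≤ m := by exact_mod_cast hm
    linarith
  have hmne : (m : ℝ) ≠ 0 := ne_of_gt hm0
  set κ : ℝ := μ1 / m with hκdef
  have hκ : 1 + α < κ := by
    rw [hκdef, lt_div_iff₀ hm0]; linarith
  have hκ0 : κ ≠ 0 := by nlinarith
  set N : Matrix (Fin n × Fin m) (Fin n × Fin m) ℝ := W * Lam n m with hNdef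
  -- κ is a root of the characteristic polynomial of N
  have hroot : N.charpoly.eval κ = 0 := by
    rw [hchar]
    obtain ⟨i0, hi0⟩ := hmem
    rw [Polynomial.eval_mul]
    apply mul_eq_zero_of_right
    rw [Polynomial.eval_prod]
    refine Finset.prod_eq_zero (Finset.mem_univ i0) ?_
    simp [hi0, hκdef]
  have hdet : (κ • (1 : Matrix (Fin n × Fin m) (Fin n × Fin m) ℝ) - N).det = 0 := by
    rw [← my_eval_charpoly]; exact hroot
  obtain ⟨v, hv0, hv⟩ := (Matrix.exists_mulVec_eq_zero_iff).2 hdet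
  have hNv : N *ᵥ v = κ • v := by
    have h1 : (κ • (1 : Matrix (Fin n × Fin m) (Fin n × Fin m) ℝ)) *ᵥ v - N *ᵥ v = 0 := by
      rw [← Matrix.sub_mulVec]; exact hv
    rw [Matrix.smul_mulVec, Matrix.one_mulVec] at h1
    exact (sub_eq_zero.mp h1).symm
  -- block column sums of W
  have hWcol : ∀ (i k : Fin n) (l : Fin m), ∑ b : Fin m, W (i, b) (k, l) = lam i k := by
    intro i k l
    have h2 : ∑ b : Fin m, W (k, l) (i, b) = lam k i := hA2 k i l
    have h3 : ∀ b : Fin m, W (i, b) (k, l) = W (k, l) (i, b) := by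
      intro b
      conv_lhs => rw [← hsymm]
      rfl
    rw [Finset.sum_congr rfl fun b _ => h3 b, h2, hA3]
  -- block column sums of Lam vanish
  have hLamcol : ∀ (k : Fin n) (q : Fin n × Fin m), ∑ l : Fin m, Lam n m (k, l) q = 0 := by
    intro k q
    by_cases h : k = q.1
    · have hcard : ((Finset.univ : Finset (Fin m)).card : ℝ) = m := by simp
      simp only [Lam, Matrix.of_apply, h, if_true]
      rw [Finset.sum_sub_distrib]
      rw [Finset.sum_ite_eq' Finset.univ q.2 (fun _ => (1 : ℝ) / m)]
      simp [Finset.sum_const, hcard]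
      field_simp
      ring
    · simp [Lam, h]
  -- block column sums of N vanish
  have hNcol : ∀ (i : Fin n) (q : Fin n × Fin m), ∑ b : Fin m, N (i, b) q = 0 := by
    intro i q
    simp only [hNdef, Matrix.mul_apply]
    rw [Finset.sum_comm]
    have : ∀ r : Fin n × Fin m, ∑ b : Fin m, W (i, b) r * Lam n m r q
        = lam i r.1 * Lam n m r q := by
      intro r
      rw [← Finset.sum_mul, hWcol i r.1 r.2]
    rw [Finset.sum_congr rfl fun r _ => this r, Fintype.sum_prod_type]
    have : ∀ k : Fin n, ∑ l : Fin m, lam i k * Lam n m (k, l) q = 0 := by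
      intro k
      rw [← Finset.mul_sum, hLamcol k q, mul_zero]
    rw [Finset.sum_congr rfl fun k _ => this k, Finset.sum_const_zero]
  -- Lam * N = (1/m) • N
  have hLamN : Lam n m * N = (1 / (m : ℝ)) • N := by
    ext p q
    simp only [Matrix.mul_apply, Matrix.smul_apply, smul_eq_mul]
    rw [Fintype.sum_prod_type, Finset.sum_comm]
    have step1 : ∀ b : Fin m,
        ∑ a : Fin n, Lam n m p (a, b) * N (a, b) q
          = ((if p.2 = b then 1 / (m : ℝ) else 0) - 1 / (m : ℝ) ^ 2) * N (p.1, b) q := by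
      intro b
      have : ∀ a : Fin n, Lam n m p (a, b) * N (a, b) q
          = if p.1 = a then ((if p.2 = b then 1 / (m : ℝ) else 0) - 1 / (m : ℝ) ^ 2)
              * N (a, b) q else 0 := by
        intro a
        simp only [Lam, Matrix.of_apply]
        by_cases h : p.1 = a <;> simp [h]
      rw [Finset.sum_congr rfl fun a _ => this a]
      rw [Finset.sum_ite_eq Finset.univ p.1
        (fun a => ((if p.2 = b then 1 / (m : ℝ) else 0) - 1 / (m : ℝ) ^ 2) * N (a, b) q)]
      simp
    rw [Finset.sum_congr rfl fun b _ => step1 b]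
    have expand : ∀ b : Fin m,
        ((if p.2 = b then 1 / (m : ℝ) else 0) - 1 / (m : ℝ) ^ 2) * N (p.1, b) q
          = (if p.2 = b then 1 / (m : ℝ) * N (p.1, b) q else 0)
              - 1 / (m : ℝ) ^ 2 * N (p.1, b) q := by
      intro b
      by_cases h : p.2 = b <;> simp [h] <;> ring
    rw [Finset.sum_congr rfl fun b _ => expand b, Finset.sum_sub_distrib]
    rw [Finset.sum_ite_eq Finset.univ p.2 (fun b => 1 / (m : ℝ) * N (p.1, b) q)]
    rw [← Finset.mul_sum, hNcol p.1 q]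
    simp
  -- Lam *ᵥ v = (1/m) • v
  have hLv : Lam n m *ᵥ v = (1 / (m : ℝ)) • v := by
    have h1 : (Lam n m * N) *ᵥ v = κ • (Lam n m *ᵥ v) := by
      rw [← Matrix.mulVec_mulVec, hNv, Matrix.mulVec_smul]
    have h2 : (Lam n m * N) *ᵥ v = κ • ((1 / (m : ℝ)) • v) := by
      rw [hLamN, Matrix.smul_mulVec, hNv, smul_comm]
    exact smul_right_injective _ hκ0 (h1.symm.trans h2)
  -- now work over ℂ
  set f : ℝ →+* ℂ := (algebraMap ℝ ℂ) with hfdef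
  set D : ℝ := 4 * ga / m - (κ - 1 + α) ^ 2 with hDdef
  have hD : 0 < D := by
    have h4 : (κ - 1 + α) ^ 2 < 4 * ga / m := by
      rw [lt_div_iff₀ hm0]
      nlinarith [hga]
    rw [hDdef]
    linarith
  set s : ℝ := Real.sqrt D with hsdef
  have hs0 : 0 < s := Real.sqrt_pos.mpr hD
  have hs2 : s ^ 2 = D := Real.sq_sqrt hD.le
  set β : ℝ := κ - 1 - α with hβdef
  set z : ℂ := Complex.ofReal (β / 2) + Complex.ofReal (s / 2) * Complex.I with hzdef
  have hzre : z.re = β / 2 := by simp [hzdef]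
  have hzim : z.im = s / 2 := by simp [hzdef]
  set c : ℂ := (κ : ℂ) - 1 - z with hcdef
  have hD2 : s ^ 2 = 4 * ga / m - (κ - 1 + α) ^ 2 := by rw [hs2, hDdef]
  have h1 : (z + (α : ℂ)).re = β / 2 + α := by simp [hzdef]
  have h2 : (z + (α : ℂ)).im = s / 2 := by simp [hzdef]
  have h3 : c.re = κ - 1 - β / 2 := by simp [hcdef, hzdef]
  have h4 : c.im = -(s / 2) := by simp [hcdef, hzdef]
  have key : (z + (α : ℂ)) * c = ((ga / m : ℝ) : ℂ) := by
    apply Complex.ext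
    · rw [Complex.mul_re, h1, h2, h3, h4, Complex.ofReal_re, hβdef]
      linear_combination (1 / 4 : ℝ) * hD2
    · rw [Complex.mul_im, h1, h2, h3, h4, Complex.ofReal_im, hβdef]
      ring
  -- complex versions of the eigen-equations
  set vc : (Fin n × Fin m) → ℂ := fun p => ((v p : ℝ) : ℂ) with hvcdef
  have hmap : ∀ (M : Matrix (Fin n × Fin m) (Fin n × Fin m) ℝ) (t : ℝ),
      M *ᵥ v = t • v → (M.map f) *ᵥ vc = (t : ℂ) • vc := by
    intro M t h
    funext p
    have hp := congrFun h p
    simp only [Matrix.mulVec, dotProduct, Pi.smul_apply, smul_eq_mul] at hp ⊢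
    simp only [Matrix.map_apply, hfdef, Complex.coe_algebraMap, hvcdef]
    exact_mod_cast hp
  have hNvc : (N.map f) *ᵥ vc = (κ : ℂ) • vc := hmap N κ hNv
  have hLvc : ((Lam n m).map f) *ᵥ vc = ((1 / (m : ℝ) : ℝ) : ℂ) • vc := hmap _ _ hLv
  set Hm : Matrix ((Fin n × Fin m) ⊕ (Fin n × Fin m)) ((Fin n × Fin m) ⊕ (Fin n × Fin m)) ℝ :=
    Matrix.fromBlocks (N - 1) (-1) (ga • Lam n m)
      (-(α • (1 : Matrix (Fin n × Fin m) (Fin n × Fin m) ℝ))) with hHmdef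
  have hHmap : Hm.map f = Matrix.fromBlocks ((N.map f) - 1) (-1)
      ((ga : ℂ) • ((Lam n m).map f)) (-((α : ℂ) • (1 : Matrix (Fin n × Fin m) (Fin n × Fin m) ℂ))) := by
    rw [hHmdef, Matrix.fromBlocks_map]
    have e1 : (N - 1).map (⇑f) = N.map ⇑f - 1 := by
      ext p q
      by_cases h : p = q <;>
        simp [Matrix.map_apply, Matrix.one_apply, Matrix.sub_apply, h, hfdef]
    have e2 : ((-1 : Matrix (Fin n × Fin m) (Fin n × Fin m) ℝ)).map ⇑f
        = (-1 : Matrix (Fin n × Fin m) (Fin n × Fin m) ℂ) := by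
      ext p q
      by_cases h : p = q <;>
        simp [Matrix.map_apply, Matrix.one_apply, h, hfdef]
    have e3 : ((ga • Lam n m)).map ⇑f = (ga : ℂ) • ((Lam n m).map ⇑f) := by
      ext p q
      simp [Matrix.map_apply, hfdef]
    have e4 : ((-(α • (1 : Matrix (Fin n × Fin m) (Fin n × Fin m) ℝ)))).map ⇑f
        = -((α : ℂ) • (1 : Matrix (Fin n × Fin m) (Fin n × Fin m) ℂ)) := by
      ext p q
      by_cases h : p = q <;>
        simp [Matrix.map_apply, Matrix.one_apply, h, hfdef]
    rw [e1, e2, e3, e4]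
  set u : ((Fin n × Fin m) ⊕ (Fin n × Fin m)) → ℂ := Sum.elim vc (c • vc) with hudef
  have hu0 : u ≠ 0 := by
    intro h
    apply hv0
    funext p
    have := congrFun h (Sum.inl p)
    simp only [hudef, Sum.elim_inl, Pi.zero_apply, hvcdef] at this
    exact_mod_cast this
  have heig : (Hm.map f) *ᵥ u = z • u := by
    rw [hHmap, hudef, Matrix.fromBlocks_mulVec]
    simp only [Sum.elim_comp_inl, Sum.elim_comp_inr]
    have hblock1 : ((N.map f) - 1) *ᵥ vc + (-1 : Matrix _ _ ℂ) *ᵥ (c • vc) = z • vc := by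
      rw [Matrix.sub_mulVec, Matrix.one_mulVec, Matrix.neg_mulVec, Matrix.one_mulVec, hNvc]
      funext p
      simp only [Pi.add_apply, Pi.sub_apply, Pi.neg_apply, Pi.smul_apply, smul_eq_mul]
      rw [hcdef]
      ring
    have hblock2 : ((ga : ℂ) • ((Lam n m).map f)) *ᵥ vc
        + (-((α : ℂ) • (1 : Matrix (Fin n × Fin m) (Fin n × Fin m) ℂ))) *ᵥ (c • vc)
        = z • (c • vc) := by
      rw [Matrix.smul_mulVec, hLvc, Matrix.neg_mulVec, Matrix.smul_mulVec,
        Matrix.one_mulVec]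
      funext p
      simp only [Pi.add_apply, Pi.neg_apply, Pi.smul_apply, smul_eq_mul]
      have hk : (z + (α : ℂ)) * c = (ga : ℂ) / (m : ℂ) := by
        rw [key]; push_cast; ring
      push_cast
      linear_combination (-(vc p)) * hk
    rw [hblock1, hblock2]
    funext x
    cases x <;> simp [hudef]
  have hdetC : ((z • (1 : Matrix ((Fin n × Fin m) ⊕ (Fin n × Fin m))
      ((Fin n × Fin m) ⊕ (Fin n × Fin m)) ℂ)) - Hm.map f).det = 0 := by
    rw [← Matrix.exists_mulVec_eq_zero_iff]
    refine ⟨u, hu0, ?_⟩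
    rw [Matrix.sub_mulVec, Matrix.smul_mulVec, Matrix.one_mulVec, heig, sub_self]
  have haeval : Polynomial.aeval z Hm.charpoly = 0 := by
    rw [Polynomial.aeval_def, ← Polynomial.eval_map, ← Matrix.charpoly_map,
      my_eval_charpoly]
    exact hdetC
  refine ⟨z, haeval, ?_, ?_, ?_, ?_⟩
  · rw [my_aeval_conj, haeval, map_zero]
  · rw [hzim]
    positivity
  · rw [hzre, hβdef, hκdef]
    field_simp
    ring
  · rw [hzre, hβdef]
    linarith
end

section
/- For every s ∈ ℝ^{mn}, the line integral of f̄ from the origin to s is nonnegative: ∫₀¹ sᵀ f̄(t·s) dt ≥ 0. -/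
open scoped BigOperators

lemma block_nonneg (m : ℕ) (hm : 2 ≤ m) (t : ℝ) (ht : 0 ≤ t) (g : Fin m → ℝ) :
    0 ≤ ∑ j : Fin m, g j * (Real.exp (t * g j) / (∑ l : Fin m, Real.exp (t * g l)) - 1 / m) := by
  have hE : 0 < ∑ l : Fin m, Real.exp (t * g l) :=
    Finset.sum_pos (fun l _ => Real.exp_pos _)
      (Finset.univ_nonempty_iff.mpr ⟨⟨0, by omega⟩⟩)
  have hm0 : (0:ℝ) < m := by positivity
  have hmono : Monovary g (fun j => Real.exp (t * g j)) := by
    intro i j h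
    simp only at h
    have := Real.exp_lt_exp.mp h
    rcases eq_or_lt_of_le ht with rfl | ht'
    · simp at this
    · nlinarith
  have cheb := hmono.sum_mul_sum_le_card_mul_sum
  simp only [Fintype.card_fin] at cheb
  have key : (∑ j, g j) * (∑ l, Real.exp (t * g l)) ≤ m * ∑ j, g j * Real.exp (t * g j) := cheb
  have expand : ∑ j : Fin m, g j * (Real.exp (t * g j) / (∑ l : Fin m, Real.exp (t * g l)) - 1 / m)
      = (∑ j, g j * Real.exp (t * g j)) / (∑ l, Real.exp (t * g l)) - (∑ j, g j) / m := by
    simp only [mul_sub]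
    rw [Finset.sum_sub_distrib]
    congr 1
    · rw [Finset.sum_div]; exact Finset.sum_congr rfl (fun j _ => by ring)
    · rw [Finset.sum_div]; exact Finset.sum_congr rfl (fun j _ => by ring)
  rw [expand, sub_nonneg, div_le_div_iff₀ hm0 hE]
  nlinarith

/-- Lemma 5: the line integral of `f̄` from the origin to `s` is nonnegative:
`∫₀¹ sᵀ f̄(t·s) dt ≥ 0`. -/
theorem stmt15 (n m : ℕ) (hn : 1 ≤ n) (hm : 2 ≤ m) (s : Fin n × Fin m → ℝ) :
    0 ≤ ∫ t in (0 : ℝ)..1, ∑ p : Fin n × Fin m, s p * fbar n m (t • s) p := by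
  apply intervalIntegral.integral_nonneg (by norm_num)
  intro t ht
  have ht0 : 0 ≤ t := ht.1
  have : ∑ p : Fin n × Fin m, s p * fbar n m (t • s) p
      = ∑ i : Fin n, ∑ j : Fin m, s (i, j) * fbar n m (t • s) (i, j) := by
    rw [← Finset.sum_product']
    rfl
  rw [this]
  apply Finset.sum_nonneg
  intro i _
  have := block_nonneg m hm t ht0 (fun j => s (i, j))
  simpa [fbar, softmax, Pi.smul_apply, smul_eq_mul] using this
end

section
/- Define F̄ : ℝ^{mn} → ℝ by F̄(s) = Σ_{i=1}^n [ log(Σ_{l=1}^m exp(s_{il})) − log m − (1/m) Σ_{l=1}^m s_{il} ]. Then F̄(0) = 0, F̄ is differentiable with gradient ∇F̄(s) = f̄(s) at every s ∈ ℝ^{mn}, and F̄(s) ≥ 0 for all s ∈ ℝ^{mn}. -/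
open scoped BigOperators

/-- The potential `F̄(s) = ∑_i [log(∑_l e^{s_{il}}) − log m − (1/m)∑_l s_{il}]`. -/
noncomputable def Fbar (n m : ℕ) (s : Fin n × Fin m → ℝ) : ℝ :=
  ∑ i : Fin n,
    (Real.log (∑ l : Fin m, Real.exp (s (i, l))) - Real.log m -
      (1 / m) * ∑ l : Fin m, s (i, l))

lemma jensen_aux (n m : ℕ) (hm : 2 ≤ m) (s : Fin n × Fin m → ℝ) (i : Fin n) :
    Real.log m + (1/m) * ∑ l : Fin m, s (i,l) ≤ Real.log (∑ l : Fin m, Real.exp (s (i,l))) := by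
  have hm0 : (0:ℝ) < m := by positivity
  have key : Real.exp ((1/m) * ∑ l : Fin m, s (i,l)) ≤ (1/m) * ∑ l : Fin m, Real.exp (s (i,l)) := by
    have := convexOn_exp.map_sum_le (t := Finset.univ) (w := fun _ : Fin m => (1:ℝ)/m)
      (p := fun l => s (i,l)) (fun _ _ => by positivity)
      (by rw [Finset.sum_const, Finset.card_univ, Fintype.card_fin, nsmul_eq_mul]; exact mul_one_div_cancel hm0.ne') (fun _ _ => Set.mem_univ _)
    simpa [Finset.mul_sum, Finset.smul_sum, mul_comm] using this
  have hmm : m * Real.exp ((1/m) * ∑ l : Fin m, s (i,l)) ≤ ∑ l : Fin m, Real.exp (s (i,l)) := by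
    have h := mul_le_mul_of_nonneg_left key (le_of_lt hm0)
    calc m * Real.exp ((1/m) * ∑ l : Fin m, s (i,l))
        ≤ m * ((1/m) * ∑ l : Fin m, Real.exp (s (i,l))) := h
      _ = ∑ l : Fin m, Real.exp (s (i,l)) := by field_simp
  calc Real.log m + (1/m) * ∑ l : Fin m, s (i,l)
      = Real.log (m * Real.exp ((1/m) * ∑ l : Fin m, s (i,l))) := by
        rw [Real.log_mul (by positivity) (Real.exp_ne_zero _), Real.log_exp]
    _ ≤ Real.log (∑ l : Fin m, Real.exp (s (i,l))) :=
        Real.log_le_log (by positivity) hmm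

lemma deriv_aux (n m : ℕ) (hm : 2 ≤ m) (s : Fin n × Fin m → ℝ) (i : Fin n) :
    HasFDerivAt (fun s : Fin n × Fin m → ℝ =>
        Real.log (∑ l : Fin m, Real.exp (s (i, l))) - Real.log m -
          (1 / m) * ∑ l : Fin m, s (i, l))
      (∑ l : Fin m,
        (Real.exp (s (i,l)) / (∑ k : Fin m, Real.exp (s (i,k))) - 1/m) •
          (ContinuousLinearMap.proj (i,l) : ((Fin n × Fin m) → ℝ) →L[ℝ] ℝ)) s := by
  have : Nonempty (Fin m) := ⟨⟨0, by omega⟩⟩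
  have hpos : 0 < ∑ k : Fin m, Real.exp (s (i,k)) :=
    Finset.sum_pos (fun _ _ => Real.exp_pos _) Finset.univ_nonempty
  have hE : HasFDerivAt (fun s : Fin n × Fin m → ℝ => ∑ l : Fin m, Real.exp (s (i,l)))
      (∑ l : Fin m, Real.exp (s (i,l)) •
        (ContinuousLinearMap.proj (i,l) : ((Fin n × Fin m) → ℝ) →L[ℝ] ℝ)) s :=
    HasFDerivAt.fun_sum (fun l _ => (hasFDerivAt_apply (i,l) s).exp)
  have hlog := hE.log (ne_of_gt hpos)
  have hlin : HasFDerivAt (fun s : Fin n × Fin m → ℝ => (1/m : ℝ) * ∑ l : Fin m, s (i,l))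
      ((1/m : ℝ) • ∑ l : Fin m,
        (ContinuousLinearMap.proj (i,l) : ((Fin n × Fin m) → ℝ) →L[ℝ] ℝ)) s :=
    (HasFDerivAt.fun_sum (fun l _ => hasFDerivAt_apply (i,l) s)).const_mul _
  have hfull := (hlog.sub_const (Real.log m)).sub hlin
  have heq : (∑ l : Fin m,
        (Real.exp (s (i,l)) / (∑ k : Fin m, Real.exp (s (i,k))) - 1/m) •
          (ContinuousLinearMap.proj (i,l) : ((Fin n × Fin m) → ℝ) →L[ℝ] ℝ)) =
      (∑ k : Fin m, Real.exp (s (i,k)))⁻¹ • (∑ l : Fin m, Real.exp (s (i,l)) •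
        (ContinuousLinearMap.proj (i,l) : ((Fin n × Fin m) → ℝ) →L[ℝ] ℝ)) -
      (1/m : ℝ) • ∑ l : Fin m,
        (ContinuousLinearMap.proj (i,l) : ((Fin n × Fin m) → ℝ) →L[ℝ] ℝ) := by
    rw [Finset.smul_sum, Finset.smul_sum, ← Finset.sum_sub_distrib]
    refine Finset.sum_congr rfl fun l _ => ?_
    rw [smul_smul, div_eq_inv_mul]; module
  rw [heq]
  exact hfull

/-- `F̄(0) = 0`, `F̄` is differentiable with gradient `∇F̄(s) = f̄(s)` at every `s`,
and `F̄(s) ≥ 0` for all `s`. -/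
theorem stmt16 (n m : ℕ) (hn : 1 ≤ n) (hm : 2 ≤ m) :
    Fbar n m 0 = 0 ∧
    (∀ s : Fin n × Fin m → ℝ,
      HasFDerivAt (Fbar n m)
        (∑ p : Fin n × Fin m,
          fbar n m s p •
            (ContinuousLinearMap.proj p : ((Fin n × Fin m) → ℝ) →L[ℝ] ℝ)) s) ∧
    (∀ s : Fin n × Fin m → ℝ, 0 ≤ Fbar n m s) := by
  refine ⟨?_, ?_, ?_⟩
  · simp [Fbar]
  · intro s
    have h : HasFDerivAt (Fbar n m)
        (∑ i : Fin n, ∑ l : Fin m,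
          (Real.exp (s (i,l)) / (∑ k : Fin m, Real.exp (s (i,k))) - 1/m) •
            (ContinuousLinearMap.proj (i,l) : ((Fin n × Fin m) → ℝ) →L[ℝ] ℝ)) s :=
      HasFDerivAt.fun_sum (fun i _ => deriv_aux n m hm s i)
    have heq : (∑ p : Fin n × Fin m,
        fbar n m s p •
          (ContinuousLinearMap.proj p : ((Fin n × Fin m) → ℝ) →L[ℝ] ℝ)) =
        ∑ i : Fin n, ∑ l : Fin m,
          (Real.exp (s (i,l)) / (∑ k : Fin m, Real.exp (s (i,k))) - 1/m) •
            (ContinuousLinearMap.proj (i,l) : ((Fin n × Fin m) → ℝ) →L[ℝ] ℝ) := by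
      rw [Fintype.sum_prod_type]
      rfl
    rw [heq]
    exact h
  · intro s
    apply Finset.sum_nonneg
    intro i _
    have := jensen_aux n m hm s i
    linarith
end
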